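/- arXiv:1304.2558 — 11 statements merged into one kernel-verified Lean document; each statement's English description precedes it below -/
import Mathlib

section
/- A compact topological semigroup S is a Clifford semigroup if and only if S contains a dense subsemigroup which is a Clifford semigroup. -/
/-- A semigroup is a *Clifford semigroup* if every element `x` has a unique
"inverse" `y` (i.e. `x*y*x = x` and `y*x*y = y`), and this inverse commutes
with `x`. -/
def IsCliffordSemigroup (S : Type*) [Semigroup S] : Prop :=
  (∀ x : S, ∃! y : S, x * y * x = x ∧ y * x * y = y) ∧
  (∀ x y : S, (x * y * x = x ∧ y * x * y = y) → x * y = y * x)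

section Alg
variable {T : Type*} [Semigroup T]

lemma clif_idem_mul (h : IsCliffordSemigroup T) {e f : T} (he : e * e = e) (hf : f * f = f) :
    (e * f) * (e * f) = e * f := by
  obtain ⟨y, ⟨h1, h2⟩, huniq⟩ := h.1 (e * f)
  have he' : ∀ t, e * (e * t) = e * t := fun t => by rw [← mul_assoc, he]
  have hf' : ∀ t, f * (f * t) = f * t := fun t => by rw [← mul_assoc, hf]
  have h1' : e * (f * (y * (e * f))) = e * f := by
    simpa [mul_assoc] using h1
  have h2t : ∀ t, y * (e * (f * (y * t))) = y * t := fun t => by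
    have := congrArg (· * t) h2
    simpa [mul_assoc] using this
  have hz : f * (y * e) = y := by
    apply huniq
    constructor
    · have : e * (f * (f * (y * (e * (e * f))))) = e * f := by
        rw [hf', he', h1']
      simpa [mul_assoc] using this
    · have : f * (y * (e * (e * (f * (f * (y * e)))))) = f * (y * e) := by
        rw [he', hf', h2t]
      simpa [mul_assoc] using this
  have hyy : y * y = y := by
    conv_lhs => rw [← hz]
    calc f * (y * e) * (f * (y * e)) = f * (y * (e * (f * (y * e)))) := by
          simp [mul_assoc]
      _ = f * (y * e) := by rw [h2t]
      _ = y := hz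
  obtain ⟨w, -, hwuniq⟩ := h.1 y
  have hefw : e * f = w := hwuniq _ ⟨h2, h1⟩
  have hyw : y = w := hwuniq _ ⟨by rw [hyy, hyy], by rw [hyy, hyy]⟩
  rw [hefw, ← hyw, hyy]

lemma clif_idem_comm (h : IsCliffordSemigroup T) {e f : T} (he : e * e = e) (hf : f * f = f) :
    e * f = f * e := by
  have hef := clif_idem_mul h he hf
  have hfe := clif_idem_mul h hf he
  have he' : ∀ t, e * (e * t) = e * t := fun t => by rw [← mul_assoc, he]
  have hf' : ∀ t, f * (f * t) = f * t := fun t => by rw [← mul_assoc, hf]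
  obtain ⟨w, -, hwuniq⟩ := h.1 (e * f)
  have h1 : e * f = w := hwuniq _ ⟨by rw [hef, hef], by rw [hef, hef]⟩
  have h2 : f * e = w := by
    apply hwuniq
    have hefe' : e * (f * (e * f)) = e * f := by simpa [mul_assoc] using hef
    have hfef' : f * (e * (f * e)) = f * e := by simpa [mul_assoc] using hfe
    constructor
    · have : e * (f * (f * (e * (e * f)))) = e * f := by rw [hf', he', hefe']
      simpa [mul_assoc] using this
    · have : f * (e * (e * (f * (f * e)))) = f * e := by rw [he', hf', hfef']
      simpa [mul_assoc] using this
  rw [h1, h2]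

lemma clif_idem_central (h : IsCliffordSemigroup T) {e : T} (he : e * e = e) (a : T) :
    e * a = a * e := by
  obtain ⟨b, ⟨hab, hba⟩, -⟩ := h.1 a
  have hcomm : a * b = b * a := h.2 a b ⟨hab, hba⟩
  have A1 : ∀ t, a * (b * (a * t)) = a * t := fun t => by
    have := congrArg (· * t) hab; simpa [mul_assoc] using this
  have A2 : ∀ t, b * (a * (b * t)) = b * t := fun t => by
    have := congrArg (· * t) hba; simpa [mul_assoc] using this
  have A1' : a * (b * a) = a := by simpa [mul_assoc] using hab
  have A2' : b * (a * b) = b := by simpa [mul_assoc] using hba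
  have he' : ∀ t, e * (e * t) = e * t := fun t => by rw [← mul_assoc, he]
  have huu : (a * b) * (a * b) = a * b := by
    calc (a * b) * (a * b) = a * (b * (a * b)) := by simp [mul_assoc]
      _ = a * b := by rw [A2']
  have hue : (a * b) * e = e * (a * b) := clif_idem_comm h huu he
  have hbacomm : ∀ t, b * (a * (e * t)) = e * (b * (a * t)) := fun t => by
    have h0 : (b * a) * e = e * (b * a) := by rw [← hcomm]; exact hue
    have := congrArg (· * t) h0
    simpa [mul_assoc] using this
  have hbae : b * (a * e) = e * (b * a) := by
    have h0 : (b * a) * e = e * (b * a) := by rw [← hcomm]; exact hue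
    simpa [mul_assoc] using h0.symm ▸ (by simp [mul_assoc] : (b * a) * e = b * (a * e)).symm
  -- e*b is an inverse of a*e
  have key1 : (a * e) * (e * b) * (a * e) = a * e := by
    have : a * (e * (e * (b * (a * e)))) = a * e := by
      rw [he', hbae, he']
      calc a * (e * (b * a)) = a * ((b * a) * e) := by
            rw [← hcomm, hue, hcomm]
        _ = a * (b * (a * e)) := by simp [mul_assoc]
        _ = a * e := A1 e
    simpa [mul_assoc] using this
  have key2 : (e * b) * (a * e) * (e * b) = e * b := by
    have : e * (b * (a * (e * (e * b)))) = e * b := by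
      rw [he', hbacomm, he', A2']
    simpa [mul_assoc] using this
  have hcomm2 : (a * e) * (e * b) = (e * b) * (a * e) := h.2 _ _ ⟨key1, key2⟩
  have haeb : a * (e * b) = e * (a * b) := by
    have lhs : (a * e) * (e * b) = a * (e * b) := by
      calc (a * e) * (e * b) = a * (e * (e * b)) := by simp [mul_assoc]
        _ = a * (e * b) := by rw [he']
    have rhs : (e * b) * (a * e) = e * (a * b) := by
      calc (e * b) * (a * e) = e * (b * (a * e)) := by simp [mul_assoc]
        _ = e * (e * (b * a)) := by rw [hbae]
        _ = e * (b * a) := he' _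
        _ = e * (a * b) := by rw [hcomm]
    rw [← lhs, hcomm2, rhs]
  calc e * a = e * (a * (b * a)) := by rw [A1']
    _ = (e * (a * b)) * a := by simp [mul_assoc]
    _ = (a * (e * b)) * a := by rw [haeb]
    _ = a * (e * (b * a)) := by simp [mul_assoc]
    _ = a * ((b * a) * e) := by rw [← hcomm, hue, hcomm]
    _ = a * (b * (a * e)) := by simp [mul_assoc]
    _ = a * e := A1 e

lemma clifford_of_P
    (hP : ∀ x : T, ∃ y, x * y * x = x ∧ y * x * y = y ∧ x * y = y * x ∧
      ∀ t, (x * y) * t = t * (x * y)) : IsCliffordSemigroup T := by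
  have central : ∀ f : T, f * f = f → ∀ t, f * t = t * f := by
    intro f hf t
    obtain ⟨y, h1, h2, h3, h4⟩ := hP f
    have hfe : f * (f * y) = f * y := by rw [← mul_assoc, hf]
    have : f = f * y := by
      calc f = (f * y) * f := h1.symm
        _ = f * (f * y) := h4 f
        _ = f * y := hfe
    rw [this]; exact h4 t
  have pairs_comm : ∀ x y : T, x * y * x = x → y * x * y = y → x * y = y * x := by
    intro x y hxyx hyxy
    have hxy_idem : (x * y) * (x * y) = x * y := by
      calc x * y * (x * y) = x * y * x * y := by simp [mul_assoc]
        _ = x * y := by rw [hxyx]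
    have hyx_idem : (y * x) * (y * x) = y * x := by
      calc y * x * (y * x) = y * x * y * x := by simp [mul_assoc]
        _ = y * x := by rw [hyxy]
    have c1 := central _ hxy_idem
    have c2 := central _ hyx_idem
    have step1 : x * y = (y * x) * (x * y) := by
      conv_lhs => rw [← hxyx]
      calc x * y * x * y = x * (y * x) * y := by simp [mul_assoc]
        _ = (y * x) * x * y := by rw [← c2 x]
        _ = (y * x) * (x * y) := by rw [mul_assoc]
    have step2 : y * x = (x * y) * (y * x) := by
      conv_lhs => rw [← hyxy]
      calc y * x * y * x = y * (x * y) * x := by simp [mul_assoc]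
        _ = (x * y) * y * x := by rw [← c1 y]
        _ = (x * y) * (y * x) := by rw [mul_assoc]
    calc x * y = (y * x) * (x * y) := step1
      _ = (x * y) * (y * x) := (c1 (y * x)).symm
      _ = y * x := step2.symm
  have uniq : ∀ x y y' : T, x * y * x = x → y * x * y = y →
      x * y' * x = x → y' * x * y' = y' → y' = y := by
    intro x y y' hxyx hyxy hxy'x hy'xy'
    have e1 : x * y = y * x := pairs_comm x y hxyx hyxy
    have e2 : x * y' = y' * x := pairs_comm x y' hxy'x hy'xy'
    have hxy_idem : (x * y) * (x * y) = x * y := by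
      calc x * y * (x * y) = x * y * x * y := by simp [mul_assoc]
        _ = x * y := by rw [hxyx]
    have hxy'_idem : (x * y') * (x * y') = x * y' := by
      calc x * y' * (x * y') = x * y' * x * y' := by simp [mul_assoc]
        _ = x * y' := by rw [hxy'x]
    have hee' : x * y = (x * y') * (x * y) := by
      conv_lhs => rw [← hxy'x]
      simp [mul_assoc]
    have he'e : x * y' = (x * y) * (x * y') := by
      conv_lhs => rw [← hxyx]
      simp [mul_assoc]
    have heq : x * y = x * y' := by
      rw [hee', central _ hxy'_idem, ← he'e]
    calc y' = y' * x * y' := hy'xy'.symm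
      _ = y' * (x * y') := by rw [mul_assoc]
      _ = y' * (x * y) := by rw [← heq]
      _ = (y' * x) * y := by rw [mul_assoc]
      _ = (x * y') * y := by rw [← e2]
      _ = (x * y) * y := by rw [← heq]
      _ = (y * x) * y := by rw [e1]
      _ = y := hyxy
  constructor
  · intro x
    obtain ⟨y, h1, h2, -, -⟩ := hP x
    exact ⟨y, ⟨h1, h2⟩, fun z hz => uniq x y z h1 h2 hz.1 hz.2⟩
  · intro x y hy
    exact pairs_comm x y hy.1 hy.2
end Alg

/-- A compact topological semigroup `S` is a Clifford semigroup if and only if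
`S` contains a dense subsemigroup which is a Clifford semigroup. -/
theorem compact_isCliffordSemigroup_iff_exists_dense_clifford_subsemigroup
    (S : Type*) [Semigroup S] [TopologicalSpace S] [T2Space S] [CompactSpace S]
    [ContinuousMul S] :
    IsCliffordSemigroup S ↔
      ∃ X : Subsemigroup S, Dense (X : Set S) ∧ IsCliffordSemigroup X := by
  constructor
  · intro hS
    refine ⟨⊤, by simp [dense_univ], ?_⟩
    apply clifford_of_P
    rintro ⟨x, hx⟩
    obtain ⟨y, ⟨h1, h2⟩, -⟩ := hS.1 x
    have hcomm : x * y = y * x := hS.2 x y ⟨h1, h2⟩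
    have hidem : (x * y) * (x * y) = x * y := by
      calc x * y * (x * y) = x * y * x * y := by simp [mul_assoc]
        _ = x * y := by rw [h1]
    refine ⟨⟨y, trivial⟩, ?_, ?_, ?_, ?_⟩
    · exact Subtype.ext h1
    · exact Subtype.ext h2
    · exact Subtype.ext hcomm
    · rintro ⟨t, ht⟩
      exact Subtype.ext (clif_idem_central hS hidem t)
  · rintro ⟨X, hdense, hX⟩
    apply clifford_of_P
    intro x
    classical
    -- the inverse operation on X
    have hj : ∀ a : ↥X, ∃ b : ↥X, a * b * a = a ∧ b * a * b = b :=
      fun a => (hX.1 a).exists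
    choose j hj1 hj2 using hj
    set i : S → S := fun s => if h : s ∈ X then ↑(j ⟨s, h⟩) else s with hi_def
    have hiX : ∀ (s : S) (h : s ∈ X), i s = ↑(j ⟨s, h⟩) := fun s h => by
      simp [hi_def, h]
    -- ultrafilter converging to x living on X
    obtain ⟨G, hGX, hGx⟩ := mem_closure_iff_ultrafilter.mp (hdense x)
    obtain ⟨y, -, hGy⟩ := isCompact_univ.ultrafilter_le_nhds (G.map i) (by simp)
    have hx : Filter.Tendsto (fun s : S => s) G (nhds x) := hGx
    have hiy : Filter.Tendsto i G (nhds y) := hGy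
    have hmem : ∀ᶠ s in (G : Filter S), s ∈ (X : Set S) := hGX
    -- coercion facts
    have coe1 : ∀ (s : S) (h : s ∈ X), s * i s * s = s := by
      intro s h
      rw [hiX s h]
      have := congrArg (Subtype.val) (hj1 ⟨s, h⟩)
      simpa using this
    have coe2 : ∀ (s : S) (h : s ∈ X), i s * s * i s = i s := by
      intro s h
      rw [hiX s h]
      have := congrArg (Subtype.val) (hj2 ⟨s, h⟩)
      simpa using this
    have coe3 : ∀ (s : S) (h : s ∈ X), s * i s = i s * s := by
      intro s h
      rw [hiX s h]
      have := congrArg (Subtype.val)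
        (hX.2 ⟨s, h⟩ (j ⟨s, h⟩) ⟨hj1 ⟨s, h⟩, hj2 ⟨s, h⟩⟩)
      simpa using this
    have coe4 : ∀ (s : S) (h : s ∈ X) (c : ↥X), (s * i s) * ↑c = ↑c * (s * i s) := by
      intro s h c
      rw [hiX s h]
      have hidem : (⟨s, h⟩ * j ⟨s, h⟩ : ↥X) * (⟨s, h⟩ * j ⟨s, h⟩) = ⟨s, h⟩ * j ⟨s, h⟩ := by
        calc (⟨s, h⟩ * j ⟨s, h⟩ : ↥X) * (⟨s, h⟩ * j ⟨s, h⟩)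
            = (⟨s, h⟩ * j ⟨s, h⟩ * ⟨s, h⟩) * j ⟨s, h⟩ := by simp [mul_assoc]
          _ = ⟨s, h⟩ * j ⟨s, h⟩ := by rw [hj1]
      have := congrArg (Subtype.val) (clif_idem_central hX hidem c)
      simpa using this
    -- limits
    have t1 : x * y * x = x := by
      refine tendsto_nhds_unique (((hx.mul hiy).mul hx).congr' ?_) hx
      filter_upwards [hmem] with s hs
      exact coe1 s hs
    have t2 : y * x * y = y := by
      refine tendsto_nhds_unique (((hiy.mul hx).mul hiy).congr' ?_) hiy
      filter_upwards [hmem] with s hs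
      exact coe2 s hs
    have t3 : x * y = y * x := by
      refine tendsto_nhds_unique ((hx.mul hiy).congr' ?_) (hiy.mul hx)
      filter_upwards [hmem] with s hs
      exact coe3 s hs
    have t4 : (x * y) * (x * y) = x * y := by
      refine tendsto_nhds_unique (((hx.mul hiy).mul (hx.mul hiy)).congr' ?_) (hx.mul hiy)
      filter_upwards [hmem] with s hs
      calc (s * i s) * (s * i s) = (s * i s * s) * i s := by simp [mul_assoc]
        _ = s * i s := by rw [coe1 s hs]
    have t5 : ∀ c : ↥X, (x * y) * ↑c = ↑c * (x * y) := by
      intro c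
      refine tendsto_nhds_unique (((hx.mul hiy).mul tendsto_const_nhds).congr' ?_)
        (tendsto_const_nhds.mul (hx.mul hiy))
      filter_upwards [hmem] with s hs
      exact coe4 s hs c
    have t5' : ∀ t : S, (x * y) * t = t * (x * y) := by
      intro t
      have hcl : IsClosed {t : S | (x * y) * t = t * (x * y)} :=
        isClosed_eq (continuous_const.mul continuous_id) (continuous_id.mul continuous_const)
      have hsub : (X : Set S) ⊆ {t : S | (x * y) * t = t * (x * y)} := by
        rintro t ht
        exact t5 ⟨t, ht⟩
      have : closure (X : Set S) ⊆ {t : S | (x * y) * t = t * (x * y)} := by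
        rw [← hcl.closure_eq]
        exact closure_mono hsub
      exact this (hdense t)
    exact ⟨y, t1, t2, t3, t5'⟩
end

section
/- Let S be a compact topological semigroup and X a dense subsemigroup of S which is a Clifford semigroup. Then the set of idempotents of S coincides with the closure in S of the set of idempotents of X, and S is a regular semigroup (for each x ∈ S there is y ∈ S with xyx = x and yxy = y). -/
/-- If `S` is a compact topological semigroup and `X` is a dense subsemigroup of `S`
which is a Clifford semigroup, then the set of idempotents of `S` coincides with the
closure of the set of idempotents of `X`, and `S` is a regular semigroup. -/
theorem idempotents_eq_closure_and_regular_of_dense_clifford_subsemigroup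
    (S : Type*) [Semigroup S] [TopologicalSpace S] [T2Space S] [CompactSpace S]
    [ContinuousMul S] (X : Subsemigroup S) (hdense : Dense (X : Set S))
    (hclifford : IsCliffordSemigroup X) :
    {e : S | e * e = e} = closure {e : S | e ∈ X ∧ e * e = e} ∧
      ∀ x : S, ∃ y : S, x * y * x = x ∧ y * x * y = y := by
  -- The set of "commuting inverse pairs" coming from `X`.
  set G : Set (S × S) := {p | p.1 ∈ X ∧ p.2 ∈ X ∧ p.1 * p.2 * p.1 = p.1 ∧
      p.2 * p.1 * p.2 = p.2 ∧ p.1 * p.2 = p.2 * p.1} with hG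
  -- Every element of `X` is the first coordinate of a pair in `G`.
  have hXG : ∀ x ∈ X, ∃ y : S, (x, y) ∈ G := by
    intro x hx
    obtain ⟨y, ⟨hy1, hy2⟩, _⟩ := hclifford.1 ⟨x, hx⟩
    have hc := hclifford.2 ⟨x, hx⟩ y ⟨hy1, hy2⟩
    refine ⟨(y : S), ?_⟩
    have e1 := congrArg Subtype.val hy1
    have e2 := congrArg Subtype.val hy2
    have e3 := congrArg Subtype.val hc
    push_cast at e1 e2 e3
    exact ⟨hx, y.2, e1, e2, e3⟩
  -- The "commuting inverse pairs" relation over `S` is closed.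
  have hBclosed : IsClosed {p : S × S | p.1 * p.2 * p.1 = p.1 ∧
      p.2 * p.1 * p.2 = p.2 ∧ p.1 * p.2 = p.2 * p.1} := by
    refine IsClosed.inter (isClosed_eq (by fun_prop) (by fun_prop)) ?_
    exact IsClosed.inter (isClosed_eq (by fun_prop) (by fun_prop))
      (isClosed_eq (by fun_prop) (by fun_prop))
  have hGB : closure G ⊆ {p : S × S | p.1 * p.2 * p.1 = p.1 ∧
      p.2 * p.1 * p.2 = p.2 ∧ p.1 * p.2 = p.2 * p.1} := by
    refine closure_minimal ?_ hBclosed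
    rintro ⟨x, y⟩ ⟨-, -, h1, h2, h3⟩
    exact ⟨h1, h2, h3⟩
  -- The closure of `G` projects onto all of `S`.
  have hproj : ∀ x : S, ∃ y : S, (x, y) ∈ closure G := by
    have hcomp : IsCompact (closure G) := isClosed_closure.isCompact
    have himg : IsClosed (Prod.fst '' closure G) :=
      (hcomp.image continuous_fst).isClosed
    have hsub : (X : Set S) ⊆ Prod.fst '' closure G := by
      intro x hx
      obtain ⟨y, hy⟩ := hXG x hx
      exact ⟨(x, y), subset_closure hy, rfl⟩
    intro x
    have hx : x ∈ Prod.fst '' closure G :=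
      himg.closure_subset_iff.mpr hsub (hdense x)
    obtain ⟨⟨a, b⟩, hmem, hab⟩ := hx
    exact ⟨b, by rwa [← hab]⟩
  constructor
  · apply Set.Subset.antisymm
    · -- hard direction: every idempotent of `S` is a limit of idempotents of `X`.
      intro e he
      obtain ⟨y, hy⟩ := hproj e
      obtain ⟨h1, h2, h3⟩ := hGB hy
      -- `e * y = e`
      have key : e * y = e := by
        have : e * y = e * (e * y) := by
          conv_lhs => rw [← he]
          rw [mul_assoc]
        rw [this, h3, ← mul_assoc, h1]
      -- `e * y` lies in the closure of the idempotents of `X`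
      have hm : Continuous fun p : S × S => p.1 * p.2 := by fun_prop
      have himage : (fun p : S × S => p.1 * p.2) '' G ⊆
          {e : S | e ∈ X ∧ e * e = e} := by
        rintro - ⟨⟨a, b⟩, ⟨ha, hb, g1, g2, g3⟩, rfl⟩
        refine ⟨mul_mem ha hb, ?_⟩
        show a * b * (a * b) = a * b
        calc a * b * (a * b) = a * (b * a * b) := by simp [mul_assoc]
          _ = a * b := by rw [g2]
      have : e * y ∈ closure {e : S | e ∈ X ∧ e * e = e} := by
        have h1' : e * y ∈ (fun p : S × S => p.1 * p.2) '' closure G :=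
          ⟨(e, y), hy, rfl⟩
        exact (closure_mono himage)
          ((image_closure_subset_closure_image hm) h1')
      rwa [key] at this
    · -- easy direction: the set of idempotents is closed.
      have : IsClosed {e : S | e * e = e} := isClosed_eq (by fun_prop) (by fun_prop)
      refine this.closure_subset_iff.mpr ?_
      rintro e ⟨-, he⟩
      exact he
  · intro x
    obtain ⟨y, hy⟩ := hproj x
    obtain ⟨h1, h2, -⟩ := hGB hy
    exact ⟨y, h1, h2⟩
end

section
/- A topological Clifford semigroup S is precompact if and only if S embeds (via a semigroup homomorphism that is a topological embedding) into a compact topological Clifford semigroup K of weight w(K) = w(S). -/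
open TopologicalSpace Topology Filter Set

universe u v

set_option linter.unusedSectionVars false
set_option linter.unusedVariables false

/-- The weight of a topological space: the smallest cardinality of a base of its
topology. -/
noncomputable def topWeight (X : Type u) [TopologicalSpace X] : Cardinal.{u} :=
  sInf {c : Cardinal.{u} | ∃ B : Set (Set X), IsTopologicalBasis B ∧ Cardinal.mk B = c}

/-- A topological semigroup `S` is *precompact* if there is a semigroup homomorphism
from `S` to a compact topological semigroup which is a topological embedding. -/
def IsPrecompactSemigroup (S : Type u) [Semigroup S] [TopologicalSpace S] : Prop :=
  ∃ (K : Type u) (_ : Semigroup K) (_ : TopologicalSpace K),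
    T2Space K ∧ CompactSpace K ∧ ContinuousMul K ∧
    ∃ f : S → K, (∀ a b : S, f (a * b) = f a * f b) ∧ IsEmbedding f

/-- `S`, together with the inversion `⁻¹`, is a topological Clifford semigroup:
a Hausdorff topological semigroup in which every `x` has a unique inverse `x⁻¹`
(`x*x⁻¹*x = x`, `x⁻¹*x*x⁻¹ = x⁻¹`) commuting with `x`, the inversion being
continuous. -/
def IsTopologicalCliffordSemigroup (S : Type u) [Semigroup S] [TopologicalSpace S]
    [Inv S] : Prop :=
  T2Space S ∧ ContinuousMul S ∧ Continuous (fun x : S => x⁻¹) ∧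
  (∀ x : S, x * x⁻¹ * x = x ∧ x⁻¹ * x * x⁻¹ = x⁻¹ ∧ x * x⁻¹ = x⁻¹ * x) ∧
  (∀ x y : S, x * y * x = x → y * x * y = y → y = x⁻¹)


section WeightLemmas
variable {X : Type u} [TopologicalSpace X]

lemma topWeight_le {B : Set (Set X)} (hB : IsTopologicalBasis B) :
    topWeight X ≤ Cardinal.mk B :=
  csInf_le' ⟨B, hB, rfl⟩

lemma exists_basis_topWeight (X : Type u) [TopologicalSpace X] :
    ∃ B : Set (Set X), IsTopologicalBasis B ∧ Cardinal.mk B = topWeight X := by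
  have hne : {c : Cardinal.{u} | ∃ B : Set (Set X), IsTopologicalBasis B ∧ Cardinal.mk B = c}.Nonempty :=
    ⟨_, {U : Set X | IsOpen U}, isTopologicalBasis_opens, rfl⟩
  have := csInf_mem hne
  obtain ⟨B, hB, hc⟩ := this
  exact ⟨B, hB, hc⟩

lemma topWeight_le_of_isEmbedding {Y : Type u} [TopologicalSpace Y] {f : X → Y}
    (hf : IsEmbedding f) : topWeight X ≤ topWeight Y := by
  obtain ⟨B, hB, hc⟩ := exists_basis_topWeight Y
  have h2 : IsTopologicalBasis (Set.preimage f '' B) := hB.isInducing hf.toIsInducing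
  calc topWeight X ≤ Cardinal.mk (Set.preimage f '' B) := topWeight_le h2
    _ ≤ Cardinal.mk B := Cardinal.mk_image_le
    _ = topWeight Y := hc

end WeightLemmas

lemma finite_of_topWeight_lt_aleph0 {X : Type u} [TopologicalSpace X] [T2Space X]
    (h : topWeight X < Cardinal.aleph0) : Finite X := by
  obtain ⟨B, hB, hc⟩ := exists_basis_topWeight X
  rw [← hc] at h
  have hBfin : B.Finite := Cardinal.lt_aleph0_iff_set_finite.mp h
  have := hBfin.to_subtype
  have hinj : Function.Injective (fun x : X => {b : ↥B | x ∈ (b : Set X)}) := by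
    intro x y hxy
    by_contra hne
    obtain ⟨U, V, hU, hV, hxU, hyV, hUV⟩ := t2_separation hne
    obtain ⟨b, hbB, hxb, hbU⟩ := hB.exists_subset_of_mem_open hxU hU
    have hxmem : (⟨b, hbB⟩ : ↥B) ∈ {b : ↥B | x ∈ (b : Set X)} := hxb
    have hxmem' : (⟨b, hbB⟩ : ↥B) ∈ {b : ↥B | y ∈ (b : Set X)} := by
      have := congrFun (congrArg Membership.mem hxy) -- fallback
      rw [show {b : ↥B | y ∈ (b : Set X)} = (fun x : X => {b : ↥B | x ∈ (b : Set X)}) y from rfl, ← hxy]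
      exact hxmem
    have : y ∈ U := hbU hxmem'
    exact (Set.disjoint_iff.mp hUV ⟨this, hyV⟩)
  exact Finite.of_injective _ hinj


section Alg
variable {S : Type*} [Semigroup S] [Inv S]

/-- In an inverse semigroup, a product of idempotents is idempotent. -/
lemma clifford_prod_idem
    (hInv : ∀ x : S, x * x⁻¹ * x = x ∧ x⁻¹ * x * x⁻¹ = x⁻¹ ∧ x * x⁻¹ = x⁻¹ * x)
    (hU : ∀ x y : S, x * y * x = x → y * x * y = y → y = x⁻¹)
    {e f : S} (he : e * e = e) (hf : f * f = f) :
    (e * f) * (e * f) = e * f := by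
  set x := (e * f)⁻¹ with hx
  obtain ⟨h1, h2, -⟩ := hInv (e * f)
  rw [← hx] at h1 h2
  have h2' : x * (e * f) * x = x := h2
  have hfxe1 : (e * f) * (f * x * e) * (e * f) = e * f := by
    have e1 : (e * f) * (f * x * e) * (e * f) = e * ((f * f) * (x * ((e * e) * f))) := by
      simp only [mul_assoc]
    rw [e1, hf, he]
    simpa only [mul_assoc] using h1
  have hfxe2 : (f * x * e) * (e * f) * (f * x * e) = f * x * e := by
    have e1 : (f * x * e) * (e * f) * (f * x * e)
        = f * (x * ((e * e) * ((f * f) * (x * e)))) := by simp only [mul_assoc]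
    rw [e1, he, hf]
    have e2 : f * (x * (e * (f * (x * e)))) = f * ((x * (e * f) * x) * e) := by
      simp only [mul_assoc]
    rw [e2, h2']
    simp only [mul_assoc]
  have hxeq : f * x * e = x := by
    have := hU (e * f) (f * x * e) hfxe1 hfxe2
    rw [this]
  have key : (f * x * e) * (f * x * e) = f * x * e := by
    have e1 : (f * x * e) * (f * x * e) = f * ((x * (e * f) * x) * e) := by
      simp only [mul_assoc]
    rw [e1, h2']
    simp only [mul_assoc]
  have hxidem : x * x = x := by rw [← hxeq]; exact key
  have hefx : e * f = x := by
    have heq := hU x (e * f) h2' h1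
    have hself : x⁻¹ = x := by
      have hxx : x * x * x = x := by rw [hxidem, hxidem]
      exact (hU x x hxx hxx).symm
    rw [heq, hself]
  rw [hefx]; exact hxidem

/-- In an inverse (Clifford) semigroup, idempotents commute. -/
lemma clifford_idem_comm
    (hInv : ∀ x : S, x * x⁻¹ * x = x ∧ x⁻¹ * x * x⁻¹ = x⁻¹ ∧ x * x⁻¹ = x⁻¹ * x)
    (hU : ∀ x y : S, x * y * x = x → y * x * y = y → y = x⁻¹)
    {e f : S} (he : e * e = e) (hf : f * f = f) :
    e * f = f * e := by
  have hefidem := clifford_prod_idem hInv hU he hf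
  have hfeidem := clifford_prod_idem hInv hU hf he
  have hA : (e * f) * (f * e) * (e * f) = e * f := by
    have e1 : (e * f) * (f * e) * (e * f) = e * ((f * f) * ((e * e) * f)) := by
      simp only [mul_assoc]
    rw [e1, hf, he]
    have e2 : e * (f * (e * f)) = (e * f) * (e * f) := by simp only [mul_assoc]
    rw [e2, hefidem]
  have hB : (f * e) * (e * f) * (f * e) = f * e := by
    have e1 : (f * e) * (e * f) * (f * e) = f * ((e * e) * ((f * f) * e)) := by
      simp only [mul_assoc]
    rw [e1, he, hf]
    have e2 : f * (e * (f * e)) = (f * e) * (f * e) := by simp only [mul_assoc]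
    rw [e2, hfeidem]
  have hefef : (e * f) * (e * f) * (e * f) = e * f := by rw [hefidem, hefidem]
  have h1' := hU (e * f) (f * e) hA hB
  have h2' := hU (e * f) (e * f) hefef hefef
  rw [h1', ← h2']
end Alg

section Closure
variable {M : Type*} [Mul M] [TopologicalSpace M] [ContinuousMul M]

lemma comm_closure [T2Space M] {R : Set M} (h : ∀ a ∈ R, ∀ b ∈ R, a * b = b * a) :
    ∀ a ∈ closure R, ∀ b ∈ closure R, a * b = b * a := by
  have step1 : ∀ b ∈ R, ∀ a ∈ closure R, a * b = b * a := by
    intro b hb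
    have hcl : IsClosed {a : M | a * b = b * a} :=
      isClosed_eq (continuous_id.mul continuous_const) (continuous_const.mul continuous_id)
    intro a ha
    exact closure_minimal (show R ⊆ {a : M | a * b = b * a} from fun a' ha' => h a' ha' b hb)
      hcl ha
  intro a ha b hb
  have hcl : IsClosed {b' : M | a * b' = b' * a} :=
    isClosed_eq (continuous_const.mul continuous_id) (continuous_id.mul continuous_const)
  exact closure_minimal (show R ⊆ {b' : M | a * b' = b' * a} from
    fun b' hb' => step1 b' hb' a ha) hcl hb

lemma mul_mem_closure' {R : Set M} (h : ∀ a ∈ R, ∀ b ∈ R, a * b ∈ R) :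
    ∀ a ∈ closure R, ∀ b ∈ closure R, a * b ∈ closure R := by
  have step1 : ∀ a ∈ R, ∀ b ∈ closure R, a * b ∈ closure R := by
    intro a ha
    have hcl : IsClosed {b : M | a * b ∈ closure R} :=
      IsClosed.preimage (continuous_const.mul continuous_id) isClosed_closure
    intro b hb
    exact closure_minimal (show R ⊆ {b : M | a * b ∈ closure R} from
      fun b' hb' => subset_closure (h a ha b' hb')) hcl hb
  intro a ha b hb
  have hcl : IsClosed {a' : M | a' * b ∈ closure R} :=
    IsClosed.preimage (continuous_id.mul continuous_const) isClosed_closure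
  exact closure_minimal (show R ⊆ {a' : M | a' * b ∈ closure R} from
    fun a' ha' => step1 a' ha' b hb) hcl ha
end Closure


section LemmaA
variable {K : Type*} [Semigroup K] [TopologicalSpace K] [T2Space K] [CompactSpace K]
  [ContinuousMul K]

/-- Idempotents commute, given that every element has a commuting inverse with
product lying in a fixed commutative set `E`. -/
lemma cliffordOfCompact_aux_idem
    {E : Set K} (hE : ∀ u ∈ E, ∀ v ∈ E, u * v = v * u)
    (h : ∀ x : K, ∃ y, x * y * x = x ∧ y * x * y = y ∧ x * y = y * x ∧ x * y ∈ E) :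
    (∀ p : K, p * p = p → p ∈ E) ∧
    (∀ p q : K, p * p = p → q * q = q → p * q = q * p) := by
  have hidem : ∀ p : K, p * p = p → p ∈ E := by
    intro p hp
    obtain ⟨y, h1, h2, h3, h4⟩ := h p
    -- u := p * y;  u * p = p (from h1), and u * p = u (using comm and hp)
    have e1 : (p * y) * p = p := h1
    have e2 : (p * y) * p = p * y := by
      rw [h3, mul_assoc, hp]
    have : p = p * y := by conv_lhs => rw [← e1, e2]
    rw [this]; exact h4
  refine ⟨hidem, fun p q hp hq => ?_⟩
  exact hE p (hidem p hp) q (hidem q hq)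

/-- Uniqueness of inverses given commuting idempotents. -/
lemma unique_inverse_of_idem_comm
    (hcomm : ∀ p q : K, p * p = p → q * q = q → p * q = q * p)
    {x y z : K} (hy1 : x * y * x = x) (hy2 : y * x * y = y)
    (hz1 : x * z * x = x) (hz2 : z * x * z = z) : y = z := by
  have hxy : (x * y) * (x * y) = x * y := by
    calc (x * y) * (x * y) = (x * y * x) * y := by simp only [mul_assoc]
      _ = x * y := by rw [hy1]
  have hyx : (y * x) * (y * x) = y * x := by
    calc (y * x) * (y * x) = (y * x * y) * x := by simp only [mul_assoc]
      _ = y * x := by rw [hy2]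
  have hxz : (x * z) * (x * z) = x * z := by
    calc (x * z) * (x * z) = (x * z * x) * z := by simp only [mul_assoc]
      _ = x * z := by rw [hz1]
  have hzx : (z * x) * (z * x) = z * x := by
    calc (z * x) * (z * x) = (z * x * z) * x := by simp only [mul_assoc]
      _ = z * x := by rw [hz2]
  -- y = z * x * y
  have key1 : y = z * x * y := by
    calc y = y * x * y := hy2.symm
      _ = y * (x * z * x) * y := by rw [hz1]
      _ = (y * x) * (z * x) * y := by simp only [mul_assoc]
      _ = (z * x) * (y * x) * y := by rw [hcomm _ _ hyx hzx, hcomm _ _ hzx hyx]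
      _ = z * (x * y * x) * y := by simp only [mul_assoc]
      _ = z * x * y := by rw [hy1]
  -- y = y * x * z
  have key2 : y = y * x * z := by
    calc y = y * x * y := hy2.symm
      _ = y * (x * z * x) * y := by rw [hz1]
      _ = y * ((x * z) * (x * y)) := by simp only [mul_assoc]
      _ = y * ((x * y) * (x * z)) := by rw [hcomm _ _ hxz hxy]
      _ = (y * x * y) * (x * z) := by simp only [mul_assoc]
      _ = y * (x * z) := by rw [hy2]
      _ = y * x * z := by rw [mul_assoc]
  -- z = z * x * y and z = y * x * z  (symmetric)
  have key3 : z = y * x * z := by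
    calc z = z * x * z := hz2.symm
      _ = z * (x * y * x) * z := by rw [hy1]
      _ = (z * x) * (y * x) * z := by simp only [mul_assoc]
      _ = (y * x) * (z * x) * z := by rw [hcomm _ _ hzx hyx, hcomm _ _ hyx hzx]
      _ = y * (x * z * x) * z := by simp only [mul_assoc]
      _ = y * x * z := by rw [hz1]
  rw [key2, ← key3]

lemma cliffordOfCompact
    {E : Set K} (hE : ∀ u ∈ E, ∀ v ∈ E, u * v = v * u)
    (h : ∀ x : K, ∃ y, x * y * x = x ∧ y * x * y = y ∧ x * y = y * x ∧ x * y ∈ E) :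
    ∃ inv : K → K, Continuous inv ∧
      (∀ x : K, x * inv x * x = x ∧ inv x * x * inv x = inv x ∧ x * inv x = inv x * x) ∧
      (∀ x y : K, x * y * x = x → y * x * y = y → y = inv x) := by
  obtain ⟨-, hcomm⟩ := cliffordOfCompact_aux_idem hE h
  classical
  set inv : K → K := fun x => Classical.choose (h x) with hinv
  have hspec : ∀ x : K, x * inv x * x = x ∧ inv x * x * inv x = inv x ∧
      x * inv x = inv x * x := by
    intro x
    obtain ⟨h1, h2, h3, -⟩ := Classical.choose_spec (h x)
    exact ⟨h1, h2, h3⟩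
  have huniq : ∀ x y : K, x * y * x = x → y * x * y = y → y = inv x := by
    intro x y hy1 hy2
    exact unique_inverse_of_idem_comm hcomm hy1 hy2 (hspec x).1 (hspec x).2.1
  refine ⟨inv, ?_, hspec, huniq⟩
  -- continuity via ultrafilters
  rw [continuous_iff_ultrafilter]
  intro x g hg
  -- image ultrafilter converges somewhere
  obtain ⟨y, -, hy⟩ := isCompact_univ.ultrafilter_le_nhds (Ultrafilter.map inv g)
    (by simp)
  -- show y is an inverse of x
  have htx : Tendsto id (↑g) (𝓝 x) := hg
  have hty : Tendsto inv (↑g) (𝓝 y) := hy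
  have hpair : Tendsto (fun c : K => (c, inv c)) (↑g) (𝓝 (x, y)) := htx.prodMk_nhds hty
  have hmul3 : Tendsto (fun c : K => c * inv c * c) (↑g) (𝓝 (x * y * x)) := by
    have : Continuous (fun p : K × K => p.1 * p.2 * p.1) :=
      (continuous_fst.mul continuous_snd).mul continuous_fst
    exact (this.tendsto (x, y)).comp hpair
  have hmul3' : Tendsto (fun c : K => inv c * c * inv c) (↑g) (𝓝 (y * x * y)) := by
    have : Continuous (fun p : K × K => p.2 * p.1 * p.2) :=
      (continuous_snd.mul continuous_fst).mul continuous_snd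
    exact (this.tendsto (x, y)).comp hpair
  have hxyx : x * y * x = x := by
    have heq : (fun c : K => c * inv c * c) = id := funext fun c => (hspec c).1
    rw [heq] at hmul3
    exact tendsto_nhds_unique hmul3 htx
  have hyxy : y * x * y = y := by
    have heq : (fun c : K => inv c * c * inv c) = inv := funext fun c => (hspec c).2.1
    rw [heq] at hmul3'
    exact tendsto_nhds_unique hmul3' hty
  have : y = inv x := huniq x y hxyx hyxy
  rwa [this] at hy
end LemmaA


section Dstar
variable {M : Type*} [Semigroup M] [TopologicalSpace M] [CompactSpace M]
  [ContinuousMul M] [Nonempty M]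

/-- Context comparison function. -/
def ctxF (φ : M → ℝ) (a b x y : M) : ℝ :=
  max (max |φ x - φ y| |φ (a * x) - φ (a * y)|)
    (max |φ (x * b) - φ (y * b)| |φ (a * x * b) - φ (a * y * b)|)

/-- Two-sided subinvariant sup-pseudometric associated to `φ`. -/
noncomputable def dstar (φ : M → ℝ) (x y : M) : ℝ :=
  sSup (Set.range fun p : M × M => ctxF φ p.1 p.2 x y)

variable {φ : M → ℝ} (hφ : Continuous φ)

lemma ctxF_continuous (hφ : Continuous φ) :
    Continuous (fun q : (M × M) × M × M => ctxF φ q.1.1 q.1.2 q.2.1 q.2.2) := by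
  have c1 : Continuous fun q : (M × M) × M × M => q.1.1 := continuous_fst.comp continuous_fst
  have c2 : Continuous fun q : (M × M) × M × M => q.1.2 := continuous_snd.comp continuous_fst
  have c3 : Continuous fun q : (M × M) × M × M => q.2.1 := continuous_fst.comp continuous_snd
  have c4 : Continuous fun q : (M × M) × M × M => q.2.2 := continuous_snd.comp continuous_snd
  unfold ctxF
  refine Continuous.max (Continuous.max ?_ ?_) (Continuous.max ?_ ?_) <;>
    refine Continuous.abs (Continuous.sub ?_ ?_) <;>
    first
      | exact hφ.comp c3
      | exact hφ.comp c4
      | exact hφ.comp (c1.mul c3)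
      | exact hφ.comp (c1.mul c4)
      | exact hφ.comp (c3.mul c2)
      | exact hφ.comp (c4.mul c2)
      | exact hφ.comp ((c1.mul c3).mul c2)
      | exact hφ.comp ((c1.mul c4).mul c2)

lemma ctxF_bdd (hφ : Continuous φ) (x y : M) :
    BddAbove (Set.range fun p : M × M => ctxF φ p.1 p.2 x y) := by
  have hc : Continuous fun p : M × M => ctxF φ p.1 p.2 x y := by
    have := (ctxF_continuous hφ).comp
      (show Continuous fun p : M × M => (p, (x, y)) from continuous_id.prodMk continuous_const)
    exact this
  exact (isCompact_range hc).bddAbove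

lemma ctxF_nonneg (φ : M → ℝ) (a b x y : M) : 0 ≤ ctxF φ a b x y :=
  le_trans (abs_nonneg _) (le_trans (le_max_left _ _) (le_max_left _ _))

lemma le_dstar_of_ctxF (hφ : Continuous φ) {x y : M} (a b : M) :
    ctxF φ a b x y ≤ dstar φ x y :=
  le_csSup (ctxF_bdd hφ x y) ⟨(a, b), rfl⟩

lemma dstar_le (hφ : Continuous φ) {x y : M} {c : ℝ}
    (h : ∀ a b : M, ctxF φ a b x y ≤ c) : dstar φ x y ≤ c :=
  csSup_le (Set.range_nonempty _) (by rintro r ⟨⟨a, b⟩, rfl⟩; exact h a b)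

lemma dstar_nonneg (hφ : Continuous φ) (x y : M) : 0 ≤ dstar φ x y := by
  obtain ⟨a⟩ := ‹Nonempty M›
  exact le_trans (ctxF_nonneg φ a a x y) (le_dstar_of_ctxF hφ a a)

lemma dstar_self (hφ : Continuous φ) (x : M) : dstar φ x x = 0 := by
  apply le_antisymm
  · exact dstar_le hφ (fun a b => by simp [ctxF])
  · exact dstar_nonneg hφ x x

lemma dstar_symm (hφ : Continuous φ) (x y : M) : dstar φ x y = dstar φ y x := by
  have h : ∀ u v : M, dstar φ u v ≤ dstar φ v u := by
    intro u v
    apply dstar_le hφ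
    intro a b
    have : ctxF φ a b u v = ctxF φ a b v u := by
      unfold ctxF; rw [abs_sub_comm, abs_sub_comm (φ (a * u)), abs_sub_comm (φ (u * b)),
        abs_sub_comm (φ (a * u * b))]
    rw [this]; exact le_dstar_of_ctxF hφ a b
  exact le_antisymm (h x y) (h y x)

lemma dstar_triangle (hφ : Continuous φ) (x y z : M) :
    dstar φ x z ≤ dstar φ x y + dstar φ y z := by
  apply dstar_le hφ
  intro a b
  have h1 : ctxF φ a b x z ≤ ctxF φ a b x y + ctxF φ a b y z := by
    unfold ctxF
    have t1 : |φ x - φ z| ≤ |φ x - φ y| + |φ y - φ z| := abs_sub_le _ _ _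
    have t2 : |φ (a*x) - φ (a*z)| ≤ |φ (a*x) - φ (a*y)| + |φ (a*y) - φ (a*z)| := abs_sub_le _ _ _
    have t3 : |φ (x*b) - φ (z*b)| ≤ |φ (x*b) - φ (y*b)| + |φ (y*b) - φ (z*b)| := abs_sub_le _ _ _
    have t4 : |φ (a*x*b) - φ (a*z*b)| ≤ |φ (a*x*b) - φ (a*y*b)| + |φ (a*y*b) - φ (a*z*b)| :=
      abs_sub_le _ _ _
    refine max_le (max_le ?_ ?_) (max_le ?_ ?_)
    · exact le_trans t1 (add_le_add (le_trans (le_max_left _ _) (le_max_left _ _))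
        (le_trans (le_max_left _ _) (le_max_left _ _)))
    · exact le_trans t2 (add_le_add (le_trans (le_max_right _ _) (le_max_left _ _))
        (le_trans (le_max_right _ _) (le_max_left _ _)))
    · exact le_trans t3 (add_le_add (le_trans (le_max_left _ _) (le_max_right _ _))
        (le_trans (le_max_left _ _) (le_max_right _ _)))
    · exact le_trans t4 (add_le_add (le_trans (le_max_right _ _) (le_max_right _ _))
        (le_trans (le_max_right _ _) (le_max_right _ _)))
  exact le_trans h1 (add_le_add (le_dstar_of_ctxF hφ a b) (le_dstar_of_ctxF hφ a b))

lemma abs_le_dstar (hφ : Continuous φ) (x y : M) : |φ x - φ y| ≤ dstar φ x y := by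
  obtain ⟨a⟩ := ‹Nonempty M›
  exact le_trans (le_trans (le_max_left _ _) (le_max_left _ _)) (le_dstar_of_ctxF hφ a a)

lemma dstar_mul_left (hφ : Continuous φ) (z x y : M) :
    dstar φ (z * x) (z * y) ≤ dstar φ x y := by
  apply dstar_le hφ
  intro a b
  have : ctxF φ a b (z * x) (z * y) ≤ max (ctxF φ z b x y) (ctxF φ (a * z) b x y) := by
    unfold ctxF
    refine max_le (max_le ?_ ?_) (max_le ?_ ?_)
    · -- |φ (z*x) - φ (z*y)| : term 2 of ctxF z b
      exact le_trans (le_trans (le_max_right _ _) (le_max_left _ _)) (le_max_left _ _)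
    · -- |φ (a*(z*x)) - ...| = term 2 of ctxF (a*z) b
      rw [show a * (z * x) = (a * z) * x from (mul_assoc a z x).symm,
        show a * (z * y) = (a * z) * y from (mul_assoc a z y).symm]
      exact le_trans (le_trans (le_max_right _ _) (le_max_left _ _)) (le_max_right _ _)
    · -- |φ (z*x*b) - ...| : term 4 of ctxF z b
      rw [show z * x * b = z * x * b from rfl]
      exact le_trans (le_trans (le_max_right _ _) (le_max_right _ _)) (le_max_left _ _)
    · -- |φ (a*(z*x)*b) - ...| : term 4 of ctxF (a*z) b
      rw [show a * (z * x) * b = (a * z) * x * b from by simp only [mul_assoc],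
        show a * (z * y) * b = (a * z) * y * b from by simp only [mul_assoc]]
      exact le_trans (le_trans (le_max_right _ _) (le_max_right _ _)) (le_max_right _ _)
  exact le_trans this (max_le (le_dstar_of_ctxF hφ z b) (le_dstar_of_ctxF hφ (a * z) b))

lemma dstar_mul_right (hφ : Continuous φ) (z x y : M) :
    dstar φ (x * z) (y * z) ≤ dstar φ x y := by
  apply dstar_le hφ
  intro a b
  have : ctxF φ a b (x * z) (y * z) ≤ max (ctxF φ a z x y) (ctxF φ a (z * b) x y) := by
    unfold ctxF
    refine max_le (max_le ?_ ?_) (max_le ?_ ?_)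
    · -- |φ (x*z) - φ (y*z)| : term 3 of ctxF a z
      exact le_trans (le_trans (le_max_left _ _) (le_max_right _ _)) (le_max_left _ _)
    · -- |φ (a*(x*z)) - ...| = term 4 of ctxF a z
      rw [show a * (x * z) = a * x * z from (mul_assoc a x z).symm,
        show a * (y * z) = a * y * z from (mul_assoc a y z).symm]
      exact le_trans (le_trans (le_max_right _ _) (le_max_right _ _)) (le_max_left _ _)
    · -- |φ (x*z*b) - ...| : term 3 of ctxF a (z*b)
      rw [show x * z * b = x * (z * b) from mul_assoc x z b,
        show y * z * b = y * (z * b) from mul_assoc y z b]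
      exact le_trans (le_trans (le_max_left _ _) (le_max_right _ _)) (le_max_right _ _)
    · -- |φ (a*(x*z)*b) - ...| : term 4 of ctxF a (z*b)
      rw [show a * (x * z) * b = a * x * (z * b) from by simp only [mul_assoc],
        show a * (y * z) * b = a * y * (z * b) from by simp only [mul_assoc]]
      exact le_trans (le_trans (le_max_right _ _) (le_max_right _ _)) (le_max_right _ _)
  exact le_trans this (max_le (le_dstar_of_ctxF hφ a z) (le_dstar_of_ctxF hφ a (z * b)))

lemma dstar_mul (hφ : Continuous φ) (x x' y y' : M) :
    dstar φ (x * y) (x' * y') ≤ dstar φ x x' + dstar φ y y' :=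
  le_trans (dstar_triangle hφ _ (x' * y) _)
    (add_le_add (dstar_mul_right hφ y x x') (dstar_mul_left hφ x' y y'))

/-- Upper semicontinuity: strict sublevel balls are open. -/
lemma dstar_ball_open (hφ : Continuous φ) (x₀ : M) (ε : ℝ) :
    IsOpen {y : M | dstar φ x₀ y < ε} := by
  rw [isOpen_iff_mem_nhds]
  intro y₀ hy₀
  simp only [Set.mem_setOf_eq] at hy₀
  set ε' := (dstar φ x₀ y₀ + ε) / 2 with hε'
  have h1 : dstar φ x₀ y₀ < ε' := by simp only [hε']; linarith [hy₀]
  have h2 : ε' < ε := by simp only [hε']; linarith [hy₀]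
  -- the open set of pairs
  have hopen : IsOpen {q : (M × M) × M | ctxF φ q.1.1 q.1.2 x₀ q.2 < ε'} := by
    have hc : Continuous fun q : (M × M) × M => ctxF φ q.1.1 q.1.2 x₀ q.2 := by
      have := (ctxF_continuous hφ).comp
        (show Continuous fun q : (M × M) × M => (q.1, (x₀, q.2)) from
          continuous_fst.prodMk (continuous_const.prodMk continuous_snd))
      exact this
    exact isOpen_lt hc continuous_const
  have hsub : (Set.univ : Set (M × M)) ×ˢ ({y₀} : Set M) ⊆
      {q : (M × M) × M | ctxF φ q.1.1 q.1.2 x₀ q.2 < ε'} := by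
    rintro ⟨p, y⟩ ⟨-, hy⟩
    simp only [Set.mem_singleton_iff] at hy
    subst hy
    exact lt_of_le_of_lt (le_dstar_of_ctxF hφ p.1 p.2) h1
  obtain ⟨u, v, -, hvopen, husub, hyv, huv⟩ :=
    generalized_tube_lemma isCompact_univ isCompact_singleton hopen hsub
  have : v ⊆ {y : M | dstar φ x₀ y < ε} := by
    intro y hyv'
    have hle : dstar φ x₀ y ≤ ε' := by
      apply dstar_le hφ
      intro a b
      have : ((a, b), y) ∈ u ×ˢ v := ⟨husub (by trivial), hyv'⟩
      exact le_of_lt (huv this)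
    exact lt_of_le_of_lt hle h2
  exact mem_nhds_iff.mpr ⟨v, this, hvopen, hyv (Set.mem_singleton y₀)⟩
end Dstar


/-- Any basis contains a basis of cardinality at most `w(X)²`. -/
lemma exists_small_subbasis {X : Type u} [TopologicalSpace X] {B₀ : Set (Set X)}
    (h₀ : IsTopologicalBasis B₀) :
    ∃ B₁ : Set (Set X), B₁ ⊆ B₀ ∧ IsTopologicalBasis B₁ ∧
      Cardinal.mk B₁ ≤ topWeight X * topWeight X := by
  classical
  obtain ⟨Bm, hBm, hcard⟩ := exists_basis_topWeight X
  set P : Set (Set X × Set X) :=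
    {p | p.1 ∈ Bm ∧ p.2 ∈ Bm ∧ ∃ b ∈ B₀, p.1 ⊆ b ∧ b ⊆ p.2} with hP
  have hchoice : ∀ p : ↥P, ∃ b ∈ B₀, (p : Set X × Set X).1 ⊆ b ∧ b ⊆ (p : Set X × Set X).2 :=
    fun p => p.2.2.2
  choose c hcB₀ hc1 hc2 using hchoice
  refine ⟨Set.range c, ?_, ?_, ?_⟩
  · rintro b ⟨p, rfl⟩; exact hcB₀ p
  · apply isTopologicalBasis_of_isOpen_of_nhds
    · rintro b ⟨p, rfl⟩; exact h₀.isOpen (hcB₀ p)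
    · intro a u hau hu
      obtain ⟨W₂, hW₂Bm, haW₂, hW₂u⟩ := hBm.exists_subset_of_mem_open hau hu
      obtain ⟨b, hbB₀, hab, hbW₂⟩ := h₀.exists_subset_of_mem_open haW₂ (hBm.isOpen hW₂Bm)
      obtain ⟨W₁, hW₁Bm, haW₁, hW₁b⟩ := hBm.exists_subset_of_mem_open hab (h₀.isOpen hbB₀)
      have hpP : (W₁, W₂) ∈ P := ⟨hW₁Bm, hW₂Bm, b, hbB₀, hW₁b, hbW₂⟩
      refine ⟨c ⟨(W₁, W₂), hpP⟩, ⟨_, rfl⟩, hc1 _ haW₁, fun z hz => hW₂u (hc2 _ hz)⟩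
  · calc Cardinal.mk (Set.range c) ≤ Cardinal.mk ↥P := Cardinal.mk_range_le
      _ ≤ Cardinal.mk ↥(Bm ×ˢ Bm) := Cardinal.mk_le_mk_of_subset
            (fun p hp => ⟨hp.1, hp.2.1⟩)
      _ = Cardinal.mk ↥Bm * Cardinal.mk ↥Bm := by
            rw [Cardinal.mk_congr (Equiv.Set.prod Bm Bm), Cardinal.mk_prod]
            simp
      _ = topWeight X * topWeight X := by rw [hcard]

section InvExists
variable {K₀ : Type u} [Semigroup K₀] [TopologicalSpace K₀] [T2Space K₀] [CompactSpace K₀]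
  [ContinuousMul K₀] {S : Type v} [Semigroup S] [Inv S]

lemma exists_commuting_inverse
    (hInv : ∀ s : S, s * s⁻¹ * s = s ∧ s⁻¹ * s * s⁻¹ = s⁻¹ ∧ s * s⁻¹ = s⁻¹ * s)
    {f : S → K₀} (hhom : ∀ a b : S, f (a * b) = f a * f b) (hinj : Function.Injective f)
    {x : K₀} (hx : x ∈ closure (Set.range f)) :
    ∃ y ∈ closure (Set.range f), x * y * x = x ∧ y * x * y = y ∧ x * y = y * x ∧
      x * y ∈ closure (Set.range fun s : S => f (s * s⁻¹)) := by
  obtain ⟨u, hur, hunhds⟩ := mem_closure_iff_ultrafilter.mp hx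
  set v : Ultrafilter S := u.comap hinj hur with hv
  have hvcoe : (v : Filter S) = Filter.comap f u := Ultrafilter.coe_comap u hinj hur
  have htx : Tendsto f (↑v) (𝓝 x) := by
    rw [hvcoe]
    exact le_trans Filter.map_comap_le hunhds
  obtain ⟨y, -, hy⟩ := isCompact_univ.ultrafilter_le_nhds
    (Ultrafilter.map (fun s : S => f s⁻¹) v) (by simp)
  have hty : Tendsto (fun s : S => f s⁻¹) (↑v) (𝓝 y) := hy
  have hymem : y ∈ closure (Set.range f) := by
    refine IsClosed.mem_of_tendsto isClosed_closure hty ?_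
    exact Filter.Eventually.of_forall fun s => subset_closure (Set.mem_range_self _)
  have hpair : Tendsto (fun s : S => (f s, f s⁻¹)) (↑v) (𝓝 (x, y)) := htx.prodMk_nhds hty
  have cxyx : Continuous (fun p : K₀ × K₀ => p.1 * p.2 * p.1) :=
    (continuous_fst.mul continuous_snd).mul continuous_fst
  have cyxy : Continuous (fun p : K₀ × K₀ => p.2 * p.1 * p.2) :=
    (continuous_snd.mul continuous_fst).mul continuous_snd
  have cxy : Continuous (fun p : K₀ × K₀ => p.1 * p.2) := continuous_fst.mul continuous_snd
  have cyx : Continuous (fun p : K₀ × K₀ => p.2 * p.1) := continuous_snd.mul continuous_fst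
  have hxyx : x * y * x = x := by
    have h1 : Tendsto (fun s : S => f s * f s⁻¹ * f s) (↑v) (𝓝 (x * y * x)) :=
      (cxyx.tendsto (x, y)).comp hpair
    have heq : (fun s : S => f s * f s⁻¹ * f s) = f := by
      funext s
      rw [← hhom, ← hhom, (hInv s).1]
    rw [heq] at h1
    exact tendsto_nhds_unique h1 htx
  have hyxy : y * x * y = y := by
    have h1 : Tendsto (fun s : S => f s⁻¹ * f s * f s⁻¹) (↑v) (𝓝 (y * x * y)) :=
      (cyxy.tendsto (x, y)).comp hpair
    have heq : (fun s : S => f s⁻¹ * f s * f s⁻¹) = fun s : S => f s⁻¹ := by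
      funext s
      rw [← hhom, ← hhom, (hInv s).2.1]
    rw [heq] at h1
    exact tendsto_nhds_unique h1 hty
  have hcomm : x * y = y * x := by
    have h1 : Tendsto (fun s : S => f s * f s⁻¹) (↑v) (𝓝 (x * y)) :=
      (cxy.tendsto (x, y)).comp hpair
    have h2 : Tendsto (fun s : S => f s⁻¹ * f s) (↑v) (𝓝 (y * x)) :=
      (cyx.tendsto (x, y)).comp hpair
    have heq : (fun s : S => f s * f s⁻¹) = fun s : S => f s⁻¹ * f s := by
      funext s
      rw [← hhom, ← hhom, (hInv s).2.2]
    rw [heq] at h1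
    exact tendsto_nhds_unique h1 h2
  have hmemE : x * y ∈ closure (Set.range fun s : S => f (s * s⁻¹)) := by
    have h1 : Tendsto (fun s : S => f s * f s⁻¹) (↑v) (𝓝 (x * y)) :=
      (cxy.tendsto (x, y)).comp hpair
    have heq : (fun s : S => f s * f s⁻¹) = fun s : S => f (s * s⁻¹) := by
      funext s; rw [hhom]
    rw [heq] at h1
    exact IsClosed.mem_of_tendsto isClosed_closure h1
      (Filter.Eventually.of_forall fun s => subset_closure (Set.mem_range_self _))
  exact ⟨y, hymem, hxyx, hyxy, hcomm, hmemE⟩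
end InvExists


section FuncSubbasis
variable (C : Type*) [tC : TopologicalSpace C] [CompactSpace C] [T2Space C]

/-- The family of rational-interval preimages under continuous real functions. -/
def funcSubbasis : Set (Set C) :=
  {U | ∃ φ : C → ℝ, Continuous φ ∧ ∃ p q : ℚ, U = φ ⁻¹' Set.Ioo (p : ℝ) (q : ℝ)}

lemma topology_eq_generateFrom_funcSubbasis :
    tC = TopologicalSpace.generateFrom (funcSubbasis C) := by
  have hle : tC ≤ TopologicalSpace.generateFrom (funcSubbasis C) := by
    apply le_generateFrom
    rintro U ⟨φ, hφ, p, q, rfl⟩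
    exact hφ.isOpen_preimage _ isOpen_Ioo
  -- Urysohn separation data, established in the original topology
  have hsep : ∀ x y : C, x ≠ y → ∃ φ : C → ℝ, Continuous φ ∧ φ x = 0 ∧ φ y = 1 := by
    intro x y hxy
    obtain ⟨φ, hφ0, hφ1, -⟩ := exists_continuous_zero_one_of_isClosed
      (isClosed_singleton (x := x)) (isClosed_singleton (x := y))
      (Set.disjoint_singleton.mpr hxy)
    exact ⟨⇑φ, φ.continuous, hφ0 rfl, hφ1 rfl⟩
  have ht2 : @T2Space C (TopologicalSpace.generateFrom (funcSubbasis C)) := by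
    refine @T2Space.mk C (TopologicalSpace.generateFrom (funcSubbasis C)) ?_
    intro x y hxy
    obtain ⟨φ, hφc, hφx, hφy⟩ := hsep x y hxy
    refine ⟨φ ⁻¹' Set.Ioo ((-1 : ℚ) : ℝ) (((1 : ℚ)/2 : ℚ) : ℝ),
      φ ⁻¹' Set.Ioo (((1 : ℚ)/2 : ℚ) : ℝ) ((2 : ℚ) : ℝ), ?_, ?_, ?_, ?_, ?_⟩
    · exact TopologicalSpace.GenerateOpen.basic _ ⟨φ, hφc, -1, 1/2, rfl⟩
    · exact TopologicalSpace.GenerateOpen.basic _ ⟨φ, hφc, 1/2, 2, rfl⟩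
    · simp only [Set.mem_preimage, hφx, Set.mem_Ioo]
      norm_num
    · simp only [Set.mem_preimage, hφy, Set.mem_Ioo]
      norm_num
    · apply Set.disjoint_left.mpr
      rintro z hz1 hz2
      simp only [Set.mem_preimage, Set.mem_Ioo] at hz1 hz2
      have h1 := hz1.2
      have h2 := hz2.1
      push_cast at h1 h2
      linarith
  have hcont : Continuous[tC, TopologicalSpace.generateFrom (funcSubbasis C)] id :=
    continuous_id_iff_le.mpr hle
  have hclosedmap := @Continuous.isClosedMap C C tC
    (TopologicalSpace.generateFrom (funcSubbasis C)) ‹CompactSpace C› ht2 id hcont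
  have hge : TopologicalSpace.generateFrom (funcSubbasis C) ≤ tC := by
    rw [TopologicalSpace.le_def]
    intro U hU
    have hUc : IsClosed[tC] Uᶜ := isClosed_compl_iff.mpr hU
    have h2 := hclosedmap Uᶜ hUc
    rw [Set.image_id] at h2
    have h3 := @IsClosed.isOpen_compl C (TopologicalSpace.generateFrom (funcSubbasis C)) Uᶜ h2
    rwa [compl_compl] at h3
  exact le_antisymm hle hge
end FuncSubbasis
section Forward
variable {S : Type u} [Semigroup S] [TopologicalSpace S] [Inv S]

lemma forward_infinite (hS : IsTopologicalCliffordSemigroup S)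
    (hP : IsPrecompactSemigroup S) (hinf : Cardinal.aleph0 ≤ topWeight S) :
    ∃ (K : Type u) (_ : Semigroup K) (_ : TopologicalSpace K) (_ : Inv K),
      IsTopologicalCliffordSemigroup K ∧ CompactSpace K ∧ topWeight K = topWeight S ∧
      ∃ f : S → K, (∀ a b : S, f (a * b) = f a * f b) ∧ IsEmbedding f := by
  classical
  obtain ⟨hT2S, hCMulS, hInvContS, hInvS, hUS⟩ := hS
  obtain ⟨K₀, iSemi, iTop, hT2, hComp, hCMul, f, hhom, hemb⟩ := hP
  -- S is nonempty
  have hSne : Nonempty S := by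
    by_contra h
    rw [not_nonempty_iff] at h
    have h1 : topWeight S ≤ Cardinal.mk {U : Set S | IsOpen U} :=
      topWeight_le isTopologicalBasis_opens
    have h2 : Cardinal.mk {U : Set S | IsOpen U} ≤ Cardinal.mk (Set S) :=
      Cardinal.mk_set_le _
    have h3 : Cardinal.mk (Set S) < Cardinal.aleph0 := by
      have : Finite (Set S) := inferInstance
      exact Cardinal.lt_aleph0_of_finite _
    exact absurd (lt_of_le_of_lt (le_trans h1 h2) h3) (not_lt.mpr hinf)
  -- the closed subsemigroup C = closure (range f)
  set C : Set K₀ := closure (Set.range f) with hC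
  have hmulC : ∀ a ∈ C, ∀ b ∈ C, a * b ∈ C := by
    apply mul_mem_closure'
    rintro a ⟨s, rfl⟩ b ⟨t, rfl⟩
    exact ⟨s * t, hhom s t⟩
  letI instMulC : Mul ↥C := ⟨fun a b => ⟨a.1 * b.1, hmulC _ a.2 _ b.2⟩⟩
  letI instSemiC : Semigroup ↥C :=
    { mul := (· * ·), mul_assoc := fun a b c => Subtype.ext (mul_assoc a.1 b.1 c.1) }
  haveI instCompC : CompactSpace ↥C :=
    isCompact_iff_compactSpace.mp (isClosed_closure.isCompact)
  haveI instCMulC : ContinuousMul ↥C := by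
    constructor
    apply Continuous.subtype_mk
    exact ((continuous_subtype_val.comp continuous_fst).mul
      (continuous_subtype_val.comp continuous_snd))
  haveI instNeC : Nonempty ↥C := by
    obtain ⟨s⟩ := hSne
    exact ⟨⟨f s, subset_closure ⟨s, rfl⟩⟩⟩
  -- the embedding S → C
  set f' : S → ↥C := Set.codRestrict f C (fun s => subset_closure ⟨s, rfl⟩) with hf'
  have hembf' : IsEmbedding f' := hemb.codRestrict _ _
  have hhomf' : ∀ a b : S, f' (a * b) = f' a * f' b := fun a b => Subtype.ext (hhom a b)
  have hvalf' : ∀ s : S, (f' s).1 = f s := fun s => rfl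
  -- commutative set of idempotent limits
  set ER : Set K₀ := closure (Set.range fun s : S => f (s * s⁻¹)) with hER
  have hERcomm : ∀ u ∈ ER, ∀ v ∈ ER, u * v = v * u := by
    apply comm_closure
    rintro a ⟨s, rfl⟩ b ⟨t, rfl⟩
    have hidem : ∀ w : S, (w * w⁻¹) * (w * w⁻¹) = w * w⁻¹ := by
      intro w
      have h1 := (hInvS w).1
      calc (w * w⁻¹) * (w * w⁻¹) = (w * w⁻¹ * w) * w⁻¹ := by simp only [mul_assoc]
        _ = w * w⁻¹ := by rw [h1]
    rw [← hhom, ← hhom, clifford_idem_comm hInvS hUS (hidem s) (hidem t)]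
  -- inverse existence in C
  have hinv_ex : ∀ c : ↥C, ∃ y : ↥C,
      c * y * c = c ∧ y * c * y = y ∧ c * y = y * c ∧ (c * y).1 ∈ ER := by
    intro c
    obtain ⟨y, hyC, h1, h2, h3, h4⟩ :=
      exists_commuting_inverse hInvS hhom hemb.injective c.2
    refine ⟨⟨y, hyC⟩, Subtype.ext h1, Subtype.ext h2, Subtype.ext h3, h4⟩
  -- the function family
  have hfuncs : ∃ (ι : Type u) (φ : ι → ↥C → ℝ),
      Cardinal.mk ι ≤ topWeight S ∧ (∀ i, Continuous (φ i)) ∧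
      (∀ (x : S) (U : Set S), x ∈ U → IsOpen U → ∃ t : Set ι, t.Finite ∧ ∃ ε : ℝ, 0 < ε ∧
        ∀ y : S, (∀ i ∈ t, |φ i (f' y) - φ i (f' x)| < ε) → y ∈ U) := by
    have heqt := topology_eq_generateFrom_funcSubbasis ↥C
    have hBC : IsTopologicalBasis
        ((fun t => Set.sInter t) '' {t : Set (Set ↥C) | t.Finite ∧ t ⊆ funcSubbasis ↥C}) :=
      isTopologicalBasis_of_subbasis heqt
    have hBS : IsTopologicalBasis (Set.preimage f' ''
        ((fun t => Set.sInter t) '' {t : Set (Set ↥C) | t.Finite ∧ t ⊆ funcSubbasis ↥C})) :=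
      hBC.isInducing hembf'.toIsInducing
    obtain ⟨B₁, hB₁sub, hB₁basis, hB₁card⟩ := exists_small_subbasis hBS
    have hwit : ∀ b : ↥B₁, ∃ t : Set (Set ↥C), t.Finite ∧ t ⊆ funcSubbasis ↥C ∧
        (b : Set S) = f' ⁻¹' (Set.sInter t) := by
      intro b
      obtain ⟨W, hW, hbW⟩ := hB₁sub b.2
      obtain ⟨t, ⟨htfin, htsub⟩, rfl⟩ := hW
      exact ⟨t, htfin, htsub, hbW.symm⟩
    choose tb htbfin htbsub htbeq using hwit
    have hf2 : ∀ (b : ↥B₁) (u : ↥(tb b)), ∃ ψ : ↥C → ℝ, Continuous ψ ∧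
        ∃ p' q' : ℚ, (u : Set ↥C) = ψ ⁻¹' Set.Ioo (p' : ℝ) (q' : ℝ) :=
      fun b u => htbsub b u.2
    choose ψf hψfc pf qf hfeq using hf2
    refine ⟨Σ b : ↥B₁, ↥(tb b), fun i => ψf i.1 i.2, ?_, fun i => hψfc i.1 i.2, ?_⟩
    · -- cardinality bound
      have h1 : Cardinal.mk (Σ b : ↥B₁, ↥(tb b))
          = Cardinal.sum (fun b : ↥B₁ => Cardinal.mk ↥(tb b)) := Cardinal.mk_sigma _
      have h2 : ∀ b : ↥B₁, Cardinal.mk ↥(tb b) ≤ Cardinal.aleph0 := by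
        intro b
        exact le_of_lt (Cardinal.lt_aleph0_iff_set_finite.mpr (htbfin b))
      have h3 : Cardinal.sum (fun b : ↥B₁ => Cardinal.mk ↥(tb b))
          ≤ Cardinal.sum (fun _ : ↥B₁ => Cardinal.aleph0) := Cardinal.sum_le_sum _ _ h2
      have h4 : Cardinal.sum (fun _ : ↥B₁ => Cardinal.aleph0)
          = Cardinal.mk ↥B₁ * Cardinal.aleph0 := Cardinal.sum_const' _ _
      have h5 : Cardinal.mk ↥B₁ * Cardinal.aleph0
          ≤ (topWeight S * topWeight S) * Cardinal.aleph0 := by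
        apply mul_le_mul' hB₁card le_rfl
      have h6 : topWeight S * topWeight S = topWeight S := Cardinal.mul_eq_self hinf
      have h7 : topWeight S * Cardinal.aleph0 = topWeight S := by
        rw [Cardinal.mul_eq_max hinf le_rfl, max_eq_left hinf]
      calc Cardinal.mk (Σ b : ↥B₁, ↥(tb b)) ≤ Cardinal.mk ↥B₁ * Cardinal.aleph0 := by
            rw [h1, ← h4]; exact h3
        _ ≤ (topWeight S * topWeight S) * Cardinal.aleph0 := h5
        _ = topWeight S := by rw [h6, h7]
    · -- neighborhood property
      intro x U hxU hUopen
      obtain ⟨b, hbB₁, hxb, hbU⟩ := hB₁basis.exists_subset_of_mem_open hxU hUopen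
      set b' : ↥B₁ := ⟨b, hbB₁⟩ with hb'
      have hbeq : (b : Set S) = f' ⁻¹' (Set.sInter (tb b')) := htbeq b'
      by_cases hte : tb b' = ∅
      · refine ⟨∅, Set.finite_empty, 1, one_pos, fun y _ => hbU ?_⟩
        have : (b : Set S) = Set.univ := by
          rw [hbeq, hte, Set.sInter_empty, Set.preimage_univ]
        rw [show y ∈ b ↔ y ∈ (b : Set S) from Iff.rfl, this]
        trivial
      · haveI hfint : Finite ↥(tb b') := (htbfin b').to_subtype
        haveI : Fintype ↥(tb b') := Fintype.ofFinite _
        haveI hnb : Nonempty ↥(tb b') := Set.nonempty_iff_ne_empty.mpr hte |>.to_subtype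
        have hxint : f' x ∈ Set.sInter (tb b') := by
          have : x ∈ (b : Set S) := hxb
          rwa [hbeq] at this
        -- margin function
        set m : ↥(tb b') → ℝ := fun u =>
          min (ψf b' u (f' x) - (pf b' u : ℝ)) ((qf b' u : ℝ) - ψf b' u (f' x)) with hm
        have hmpos : ∀ u, 0 < m u := by
          intro u
          have hxu : f' x ∈ (u : Set ↥C) := hxint u u.2
          rw [hfeq b' u] at hxu
          simp only [Set.mem_preimage, Set.mem_Ioo] at hxu
          exact lt_min (by linarith [hxu.1]) (by linarith [hxu.2])
        set ε : ℝ := Finset.univ.inf' Finset.univ_nonempty m with hε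
        have hεpos : 0 < ε := by
          rw [hε, Finset.lt_inf'_iff]
          exact fun u _ => hmpos u
        refine ⟨Set.range (fun u : ↥(tb b') => (⟨b', u⟩ : Σ b : ↥B₁, ↥(tb b))),
          Set.finite_range _, ε, hεpos, ?_⟩
        intro y hy
        apply hbU
        rw [show y ∈ b ↔ y ∈ (b : Set S) from Iff.rfl, hbeq]
        intro u huin
        set u' : ↥(tb b') := ⟨u, huin⟩ with hu'
        have hyi := hy ⟨b', u'⟩ ⟨u', rfl⟩
        have hεle : ε ≤ m u' := Finset.inf'_le _ (Finset.mem_univ u')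
        have habs : |ψf b' u' (f' y) - ψf b' u' (f' x)| < m u' := lt_of_lt_of_le hyi hεle
        rw [abs_lt] at habs
        have h1 := habs.1
        have h2 := habs.2
        rw [hm] at h1 h2
        have hl : (min (ψf b' u' (f' x) - (pf b' u' : ℝ))
            ((qf b' u' : ℝ) - ψf b' u' (f' x))) ≤ ψf b' u' (f' x) - (pf b' u' : ℝ) :=
          min_le_left _ _
        have hr : (min (ψf b' u' (f' x) - (pf b' u' : ℝ))
            ((qf b' u' : ℝ) - ψf b' u' (f' x))) ≤ (qf b' u' : ℝ) - ψf b' u' (f' x) :=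
          min_le_right _ _
        have hym : f' y ∈ (u' : Set ↥C) := by
          rw [hfeq b' u']
          simp only [Set.mem_preimage, Set.mem_Ioo]
          constructor <;> linarith
        exact hym

  obtain ⟨ι, φ, hιcard, hφc, hstar⟩ := hfuncs
  -- separation of points
  have hsepι : ∀ x y : S, x ≠ y → ∃ i, φ i (f' x) ≠ φ i (f' y) := by
    intro x y hxy
    have hUopen : IsOpen {z : S | z ≠ y} := isOpen_ne
    obtain ⟨t, htfin, ε, hε, hsub⟩ := hstar x {z : S | z ≠ y} hxy hUopen
    by_contra h
    push_neg at h
    have : y ∈ {z : S | z ≠ y} := by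
      apply hsub
      intro i hi
      rw [h i]
      simpa using hε
    exact this rfl
  -- the setoid and quotient
  set r : Setoid ↥C := ⟨fun c d => ∀ i, dstar (φ i) c d = 0, by
      constructor
      · intro c i; exact dstar_self (hφc i) c
      · intro c d h i; rw [dstar_symm (hφc i)]; exact h i
      · intro c d e h1 h2 i
        refine le_antisymm ?_ (dstar_nonneg (hφc i) _ _)
        calc dstar (φ i) c e ≤ dstar (φ i) c d + dstar (φ i) d e := dstar_triangle (hφc i) _ _ _
          _ = 0 := by rw [h1 i, h2 i]; ring⟩ with hr
  set K : Type u := Quotient r with hK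
  set q : ↥C → K := Quotient.mk r with hq
  have hqsurj : Function.Surjective q := Quotient.exists_rep
  -- multiplication on K
  have hcongr : ∀ (a₁ b₁ : ↥C), a₁ ≈ b₁ → ∀ (a₂ b₂ : ↥C), a₂ ≈ b₂ → (a₁ * a₂) ≈ (b₁ * b₂) := by
    intro a₁ b₁ h1 a₂ b₂ h2 i
    refine le_antisymm ?_ (dstar_nonneg (hφc i) _ _)
    calc dstar (φ i) (a₁ * a₂) (b₁ * b₂) ≤ dstar (φ i) a₁ b₁ + dstar (φ i) a₂ b₂ :=
        dstar_mul (hφc i) _ _ _ _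
      _ = 0 := by rw [h1 i, h2 i]; ring
  letI instMulK : Mul K := ⟨Quotient.map₂ (· * ·) hcongr⟩
  have hqmul : ∀ a b : ↥C, q a * q b = q (a * b) := fun a b => rfl
  letI instSemiK : Semigroup K :=
    { mul := (· * ·),
      mul_assoc := by
        intro a b c
        obtain ⟨a', rfl⟩ := hqsurj a
        obtain ⟨b', rfl⟩ := hqsurj b
        obtain ⟨c', rfl⟩ := hqsurj c
        rw [hqmul, hqmul, hqmul, hqmul, mul_assoc] }
  -- lifted pseudometrics
  have hwd : ∀ (i : ι) (a₁ a₂ b₁ b₂ : ↥C), a₁ ≈ b₁ → a₂ ≈ b₂ →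
      dstar (φ i) a₁ a₂ = dstar (φ i) b₁ b₂ := by
    intro i a₁ a₂ b₁ b₂ h1 h2
    have hle : ∀ (u₁ u₂ v₁ v₂ : ↥C), dstar (φ i) u₁ v₁ = 0 → dstar (φ i) u₂ v₂ = 0 →
        dstar (φ i) u₁ u₂ ≤ dstar (φ i) v₁ v₂ := by
      intro u₁ u₂ v₁ v₂ e1 e2
      calc dstar (φ i) u₁ u₂ ≤ dstar (φ i) u₁ v₁ + dstar (φ i) v₁ u₂ :=
          dstar_triangle (hφc i) _ _ _
        _ ≤ dstar (φ i) u₁ v₁ + (dstar (φ i) v₁ v₂ + dstar (φ i) v₂ u₂) := by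
            have := dstar_triangle (hφc i) v₁ v₂ u₂
            linarith
        _ = dstar (φ i) v₁ v₂ := by
            rw [e1, dstar_symm (hφc i) v₂ u₂, e2]; ring
    exact le_antisymm (hle a₁ a₂ b₁ b₂ (h1 i) (h2 i))
      (hle b₁ b₂ a₁ a₂ (by rw [dstar_symm (hφc i)]; exact h1 i)
        (by rw [dstar_symm (hφc i)]; exact h2 i))
  set D : ι → K → K → ℝ := fun i => Quotient.lift₂ (dstar (φ i))
    (fun a₁ a₂ b₁ b₂ h1 h2 => hwd i a₁ a₂ b₁ b₂ h1 h2) with hD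
  have hDq : ∀ (i : ι) (a b : ↥C), D i (q a) (q b) = dstar (φ i) a b := fun i a b => rfl
  have hDnonneg : ∀ (i : ι) (x y : K), 0 ≤ D i x y := by
    intro i x y
    obtain ⟨a, rfl⟩ := hqsurj x
    obtain ⟨b, rfl⟩ := hqsurj y
    exact dstar_nonneg (hφc i) a b
  have hDself : ∀ (i : ι) (x : K), D i x x = 0 := by
    intro i x
    obtain ⟨a, rfl⟩ := hqsurj x
    exact dstar_self (hφc i) a
  have hDsymm : ∀ (i : ι) (x y : K), D i x y = D i y x := by
    intro i x y
    obtain ⟨a, rfl⟩ := hqsurj x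
    obtain ⟨b, rfl⟩ := hqsurj y
    exact dstar_symm (hφc i) a b
  have hDtri : ∀ (i : ι) (x y z : K), D i x z ≤ D i x y + D i y z := by
    intro i x y z
    obtain ⟨a, rfl⟩ := hqsurj x
    obtain ⟨b, rfl⟩ := hqsurj y
    obtain ⟨c, rfl⟩ := hqsurj z
    exact dstar_triangle (hφc i) a b c
  have hDeq : ∀ (x y : K), (∀ i, D i x y = 0) → x = y := by
    intro x y h
    obtain ⟨a, rfl⟩ := hqsurj x
    obtain ⟨b, rfl⟩ := hqsurj y
    exact Quotient.sound (fun i => h i)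
  -- the topology on K
  set SB : Set (Set K) := {V | ∃ (i : ι) (k : K) (ε : ℝ), 0 < ε ∧ V = {k' | D i k k' < ε}}
    with hSB
  letI instTopK : TopologicalSpace K := TopologicalSpace.generateFrom SB
  have hballopen : ∀ (i : ι) (k : K) (ε : ℝ), 0 < ε → IsOpen {k' | D i k k' < ε} :=
    fun i k ε hε => TopologicalSpace.GenerateOpen.basic _ ⟨i, k, ε, hε, rfl⟩
  have hqcont : Continuous q := by
    rw [continuous_generateFrom_iff]
    rintro V ⟨i, k, ε, hε, rfl⟩
    obtain ⟨c₀, rfl⟩ := hqsurj k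
    have : q ⁻¹' {k' | D i (q c₀) k' < ε} = {c | dstar (φ i) c₀ c < ε} := rfl
    rw [this]
    exact dstar_ball_open (hφc i) c₀ ε
  haveI hT2K : T2Space K := by
    constructor
    intro x y hxy
    have hne : ∃ i, D i x y ≠ 0 := by
      by_contra h
      push_neg at h
      exact hxy (hDeq x y h)
    obtain ⟨i, hi⟩ := hne
    have hpos : 0 < D i x y := lt_of_le_of_ne (hDnonneg i x y) (Ne.symm hi)
    refine ⟨{k' | D i x k' < D i x y / 2}, {k' | D i y k' < D i x y / 2},
      hballopen i x _ (by linarith), hballopen i y _ (by linarith), ?_, ?_, ?_⟩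
    · simp only [Set.mem_setOf_eq, hDself]; linarith
    · simp only [Set.mem_setOf_eq, hDself]; linarith
    · apply Set.disjoint_left.mpr
      rintro z hz1 hz2
      simp only [Set.mem_setOf_eq] at hz1 hz2
      have : D i x y ≤ D i x z + D i z y := hDtri i x z y
      rw [hDsymm i z y] at this
      linarith
  haveI hCompK : CompactSpace K := by
    constructor
    have : (Set.univ : Set K) = q '' Set.univ := by
      rw [Set.image_univ]
      exact (Set.range_eq_univ.mpr hqsurj).symm
    rw [this]
    exact isCompact_univ.image hqcont
  haveI hCMulK : ContinuousMul K := by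
    constructor
    have hqq : Continuous (fun p : ↥C × ↥C => (q p.1, q p.2)) :=
      (hqcont.comp continuous_fst).prodMk (hqcont.comp continuous_snd)
    have hqqsurj : Function.Surjective (fun p : ↥C × ↥C => (q p.1, q p.2)) := by
      rintro ⟨x, y⟩
      obtain ⟨a, rfl⟩ := hqsurj x
      obtain ⟨b, rfl⟩ := hqsurj y
      exact ⟨(a, b), rfl⟩
    have hqm : IsQuotientMap (fun p : ↥C × ↥C => (q p.1, q p.2)) :=
      (hqq.isClosedMap).isQuotientMap hqq hqqsurj
    rw [hqm.continuous_iff]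
    have : (fun p : K × K => p.1 * p.2) ∘ (fun p : ↥C × ↥C => (q p.1, q p.2))
        = q ∘ (fun p : ↥C × ↥C => p.1 * p.2) := by
      funext p
      exact hqmul p.1 p.2
    rw [this]
    exact hqcont.comp continuous_mul
  -- Clifford structure on K
  have hcliff : ∃ inv : K → K, Continuous inv ∧
      (∀ x : K, x * inv x * x = x ∧ inv x * x * inv x = inv x ∧ x * inv x = inv x * x) ∧
      (∀ x y : K, x * y * x = x → y * x * y = y → y = inv x) := by
    apply cliffordOfCompact (E := q '' {c : ↥C | c.1 ∈ ER})
    · rintro u ⟨c, hc, rfl⟩ v ⟨d, hd, rfl⟩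
      rw [hqmul, hqmul]
      congr 1
      exact Subtype.ext (hERcomm c.1 hc d.1 hd)
    · intro x
      obtain ⟨c, rfl⟩ := hqsurj x
      obtain ⟨y, h1, h2, h3, h4⟩ := hinv_ex c
      refine ⟨q y, ?_, ?_, ?_, ?_⟩
      · rw [hqmul, hqmul, h1]
      · rw [hqmul, hqmul, h2]
      · rw [hqmul, hqmul, h3]
      · rw [hqmul]
        exact ⟨c * y, h4, rfl⟩
  obtain ⟨inv, hinvcont, hinvprop, hinvuniq⟩ := hcliff
  letI instInvK : Inv K := ⟨inv⟩
  have hcliffK : IsTopologicalCliffordSemigroup K :=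
    ⟨hT2K, hCMulK, hinvcont, hinvprop, hinvuniq⟩
  -- the embedding g = q ∘ f'
  set g : S → K := fun s => q (f' s) with hg
  have hghom : ∀ a b : S, g (a * b) = g a * g b := by
    intro a b
    rw [hg]
    simp only
    rw [hhomf', ← hqmul]
  have hgcont : Continuous g := hqcont.comp hembf'.continuous
  have hginj : Function.Injective g := by
    intro x y hxy
    by_contra hne
    obtain ⟨i, hi⟩ := hsepι x y hne
    apply hi
    have hrel : f' x ≈ f' y := Quotient.exact hxy
    have h0 : dstar (φ i) (f' x) (f' y) = 0 := hrel i
    have := abs_le_dstar (hφc i) (f' x) (f' y)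
    rw [h0] at this
    have : |φ i (f' x) - φ i (f' y)| = 0 := le_antisymm this (abs_nonneg _)
    linarith [abs_eq_zero.mp this, sub_eq_zero.mp (abs_eq_zero.mp this)]
  have hgembed : IsEmbedding g := by
    refine ⟨isInducing_iff_nhds.mpr fun x => le_antisymm ?_ ?_, hginj⟩
    · exact (hgcont.tendsto x).le_comap
    · -- comap g (𝓝 (g x)) ≤ 𝓝 x
      intro U hU
      obtain ⟨V, hVU, hVopen, hxV⟩ := mem_nhds_iff.mp hU
      obtain ⟨t, htfin, ε, hε, hsub⟩ := hstar x V hxV hVopen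
      refine Filter.mem_comap.mpr ⟨⋂ i ∈ t, {k | D i (g x) k < ε}, ?_, ?_⟩
      · apply IsOpen.mem_nhds
        · exact htfin.isOpen_biInter (fun i _ => hballopen i (g x) ε hε)
        · simp only [Set.mem_iInter, Set.mem_setOf_eq]
          intro i _
          rw [hDself]
          exact hε
      · intro y hy
        simp only [Set.mem_preimage, Set.mem_iInter, Set.mem_setOf_eq] at hy
        apply hVU
        apply hsub
        intro i hi
        have h1 : D i (g x) (g y) < ε := hy i hi
        have h2 : dstar (φ i) (f' x) (f' y) < ε := h1
        have h3 := abs_le_dstar (hφc i) (f' x) (f' y)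
        rw [abs_sub_comm]
        linarith
  -- weight equality
  have hwge : topWeight S ≤ topWeight K := topWeight_le_of_isEmbedding hgembed
  have hwle : topWeight K ≤ topWeight S := by
    -- dense subset of S of size ≤ w(S)
    obtain ⟨Bm, hBm, hBmCard⟩ := exists_basis_topWeight S
    have hptchoice : ∀ p : {b : Set S // b ∈ Bm ∧ b.Nonempty}, ∃ a : S, a ∈ p.1 :=
      fun p => p.2.2
    choose pt hpt using hptchoice
    set A : Set S := Set.range pt with hA
    have hAcard : Cardinal.mk ↥A ≤ topWeight S := by
      calc Cardinal.mk ↥A ≤ Cardinal.mk {b : Set S // b ∈ Bm ∧ b.Nonempty} :=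
            Cardinal.mk_range_le
        _ ≤ Cardinal.mk ↥Bm := Cardinal.mk_le_of_injective
            (f := fun p => (⟨p.1, p.2.1⟩ : ↥Bm)) (by
              rintro ⟨b₁, h₁⟩ ⟨b₂, h₂⟩ h
              simpa using congrArg Subtype.val h)
        _ = topWeight S := hBmCard
    have hAdense : ∀ u : Set S, IsOpen u → u.Nonempty → ∃ a ∈ A, a ∈ u := by
      intro u hu ⟨x, hx⟩
      obtain ⟨b, hbBm, hxb, hbu⟩ := hBm.exists_subset_of_mem_open hx hu
      exact ⟨pt ⟨b, hbBm, ⟨x, hxb⟩⟩, ⟨_, rfl⟩, hbu (hpt ⟨b, hbBm, ⟨x, hxb⟩⟩)⟩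
    haveI hNeA : Nonempty ↥A := by
      obtain ⟨x⟩ := hSne
      obtain ⟨a, haA, -⟩ := hAdense Set.univ isOpen_univ ⟨x, trivial⟩
      exact ⟨⟨a, haA⟩⟩
    haveI hNeι : Nonempty ι := by
      by_contra h
      rw [not_nonempty_iff] at h
      -- then all points of S are equal, so S is finite, contradicting infinite weight
      have hsub : ∀ x y : S, x = y := by
        intro x y
        by_contra hxy
        obtain ⟨i, -⟩ := hsepι x y hxy
        exact h.elim i
      haveI : Subsingleton S := ⟨hsub⟩
      haveI : Finite S := Finite.of_subsingleton
      have h1 : topWeight S ≤ Cardinal.mk {U : Set S | IsOpen U} :=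
        topWeight_le isTopologicalBasis_opens
      have h2 : Cardinal.mk {U : Set S | IsOpen U} ≤ Cardinal.mk (Set S) :=
        Cardinal.mk_set_le _
      have h3 : Cardinal.mk (Set S) < Cardinal.aleph0 := Cardinal.lt_aleph0_of_finite _
      exact absurd (lt_of_le_of_lt (le_trans h1 h2) h3) (not_lt.mpr hinf)
    -- density of g '' A in K
    have hgAdense : ∀ W : Set K, IsOpen W → W.Nonempty → ∃ a ∈ A, g a ∈ W := by
      intro W hW ⟨k, hk⟩
      obtain ⟨c, rfl⟩ := hqsurj k
      have hpre : IsOpen (q ⁻¹' W) := hW.preimage hqcont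
      obtain ⟨O, hO, hOeq⟩ := isOpen_induced_iff.mp hpre
      have hcO : c.1 ∈ O := by
        have : c ∈ q ⁻¹' W := hk
        rw [← hOeq] at this
        exact this
      have hmeets := mem_closure_iff.mp c.2 O hO hcO
      obtain ⟨z, hzO, s, rfl⟩ := hmeets
      have hfs : f' s ∈ q ⁻¹' W := by
        rw [← hOeq]
        exact hzO
      obtain ⟨a, haA, ha⟩ := hAdense (g ⁻¹' W) (hW.preimage hgcont) ⟨s, hfs⟩
      exact ⟨a, haA, ha⟩
    -- the index type for the small basis
    set J : Type u := ι × (↥A × ULift.{u} ℕ) with hJ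
    set ballA : J → Set K := fun j =>
      {k | D j.1 (g j.2.1.1) k < 1 / (j.2.2.down + 1 : ℝ)} with hballA
    have hballApos : ∀ j : J, (0 : ℝ) < 1 / (j.2.2.down + 1 : ℝ) := by
      intro j
      positivity
    have hballAopen : ∀ j : J, IsOpen (ballA j) :=
      fun j => hballopen j.1 (g j.2.1.1) _ (hballApos j)
    -- it is a basis
    have hSBbasis : IsTopologicalBasis
        ((fun t => Set.sInter t) '' {t : Set (Set K) | t.Finite ∧ t ⊆ SB}) :=
      isTopologicalBasis_of_subbasis rfl
    have hBK : IsTopologicalBasis (Set.range (fun F : Finset J => ⋂ j ∈ F, ballA j)) := by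
      apply isTopologicalBasis_of_isOpen_of_nhds
      · rintro W ⟨F, rfl⟩
        exact F.finite_toSet.isOpen_biInter (fun j _ => hballAopen j)
      · intro k u hku hu
        obtain ⟨W, hWmem, hkW, hWu⟩ := hSBbasis.exists_subset_of_mem_open hku hu
        obtain ⟨t, ⟨htfin, htSB⟩, rfl⟩ := hWmem
        haveI : Finite ↥t := htfin.to_subtype
        have hrepl : ∀ V : ↥t, ∃ j : J, k ∈ ballA j ∧ ballA j ⊆ V.1 := by
          rintro ⟨V, hVt⟩
          obtain ⟨i, k₀, ε, hε, rfl⟩ := htSB hVt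
          have hkV : D i k₀ k < ε := hkW _ hVt
          set δ := ε - D i k₀ k with hδ
          have hδpos : 0 < δ := by rw [hδ]; linarith
          obtain ⟨n, hn⟩ := exists_nat_gt (2 / δ)
          have hnpos : (0 : ℝ) < n + 1 := by positivity
          have h2n : 2 / (n + 1 : ℝ) < δ := by
            rw [div_lt_iff₀ hnpos]
            have h2d : 2 < δ * n := by
              rw [div_lt_iff₀ hδpos] at hn
              linarith [hn]
            calc (2 : ℝ) < δ * n := h2d
              _ ≤ δ * (n + 1) := by nlinarith [hδpos]
          have hballopen' : IsOpen {k' | D i k k' < 1 / (n + 1 : ℝ)} :=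
            hballopen i k _ (by positivity)
          have hballne : Set.Nonempty {k' | D i k k' < 1 / (n + 1 : ℝ)} :=
            ⟨k, by simp only [Set.mem_setOf_eq, hDself]; positivity⟩
          obtain ⟨a, haA, hga⟩ := hgAdense _ hballopen' hballne
          refine ⟨(i, (⟨a, haA⟩, ULift.up n)), ?_, ?_⟩
          · show D i (g a) k < 1 / (n + 1 : ℝ)
            rw [hDsymm]
            exact hga
          · intro k' hk'
            have h1 : D i (g a) k' < 1 / (n + 1 : ℝ) := hk'
            have h2 : D i k (g a) < 1 / (n + 1 : ℝ) := hga
            show D i k₀ k' < ε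
            calc D i k₀ k' ≤ D i k₀ k + D i k k' := hDtri i k₀ k k'
              _ ≤ D i k₀ k + (D i k (g a) + D i (g a) k') := by
                  linarith [hDtri i k (g a) k']
              _ < D i k₀ k + 2 / (n + 1 : ℝ) := by
                  have : (1 : ℝ) / (n + 1) + 1 / (n + 1) = 2 / (n + 1) := by ring
                  linarith
              _ < D i k₀ k + δ := by linarith
              _ = ε := by rw [hδ]; ring
        choose jV hjV1 hjV2 using hrepl
        have hFr : (Set.range jV).Finite := Set.finite_range jV
        refine ⟨⋂ j ∈ hFr.toFinset, ballA j, ⟨hFr.toFinset, rfl⟩, ?_, ?_⟩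
        · simp only [Set.mem_iInter]
          rintro j hj
          rw [Set.Finite.mem_toFinset] at hj
          obtain ⟨V, rfl⟩ := hj
          exact hjV1 V
        · intro k' hk'
          simp only [Set.mem_iInter] at hk'
          apply hWu
          intro V hVt
          apply hjV2 ⟨V, hVt⟩
          exact hk' (jV ⟨V, hVt⟩) (by rw [Set.Finite.mem_toFinset]; exact ⟨_, rfl⟩)
    -- cardinality of the small basis
    haveI hInfJ : Infinite J := by
      rw [hJ]
      infer_instance
    calc topWeight K ≤ Cardinal.mk (Set.range (fun F : Finset J => ⋂ j ∈ F, ballA j)) :=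
          topWeight_le hBK
      _ ≤ Cardinal.mk (Finset J) := Cardinal.mk_range_le
      _ = Cardinal.mk J := Cardinal.mk_finset_of_infinite J
      _ ≤ topWeight S := by
          rw [hJ]
          have h1 : Cardinal.mk (ι × (↥A × ULift.{u} ℕ))
              = Cardinal.mk ι * (Cardinal.mk ↥A * Cardinal.mk (ULift.{u} ℕ)) := by
            rw [Cardinal.mk_prod, Cardinal.mk_prod]
            simp
          rw [h1]
          have hUl : Cardinal.mk (ULift.{u} ℕ) = Cardinal.aleph0 := by
            simp
          rw [hUl]
          have hb1 : Cardinal.mk ↥A * Cardinal.aleph0 ≤ topWeight S * topWeight S :=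
            mul_le_mul' hAcard hinf
          have hb2 : Cardinal.mk ι * (Cardinal.mk ↥A * Cardinal.aleph0)
              ≤ topWeight S * (topWeight S * topWeight S) :=
            mul_le_mul' hιcard hb1
          calc Cardinal.mk ι * (Cardinal.mk ↥A * Cardinal.aleph0)
              ≤ topWeight S * (topWeight S * topWeight S) := hb2
            _ = topWeight S := by
                rw [Cardinal.mul_eq_self hinf, Cardinal.mul_eq_self hinf]

  exact ⟨K, instSemiK, instTopK, instInvK, hcliffK, hCompK, le_antisymm hwle hwge, g,
    hghom, hgembed⟩
end Forward

/-- A topological Clifford semigroup `S` is precompact if and only if `S` embeds,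
via a semigroup homomorphism that is a topological embedding, into a compact
topological Clifford semigroup `K` of weight `w(K) = w(S)`. -/
theorem isPrecompactSemigroup_iff_embeds_into_compact_clifford_of_same_weight
    (S : Type u) [Semigroup S] [TopologicalSpace S] [Inv S]
    (hS : IsTopologicalCliffordSemigroup S) :
    IsPrecompactSemigroup S ↔
      ∃ (K : Type u) (_ : Semigroup K) (_ : TopologicalSpace K) (_ : Inv K),
        IsTopologicalCliffordSemigroup K ∧ CompactSpace K ∧ topWeight K = topWeight S ∧
        ∃ f : S → K, (∀ a b : S, f (a * b) = f a * f b) ∧ IsEmbedding f := by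
  constructor
  · intro hP
    by_cases hinf : Cardinal.aleph0 ≤ topWeight S
    · exact forward_infinite hS hP hinf
    · -- finite case: S itself is compact
      rw [not_le] at hinf
      haveI : T2Space S := hS.1
      haveI : Finite S := finite_of_topWeight_lt_aleph0 hinf
      haveI : CompactSpace S := inferInstance
      exact ⟨S, ‹Semigroup S›, ‹TopologicalSpace S›, ‹Inv S›, hS, ‹CompactSpace S›, rfl,
        id, fun a b => rfl, IsEmbedding.id⟩
  · rintro ⟨K, iS, iT, iI, hK, hComp, -, f, hhom, hemb⟩
    exact ⟨K, iS, iT, hK.1, hComp, hK.2.1, f, hhom, hemb⟩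
end

section
/- Every locally compact punctiform topological semilattice is Lawson, i.e., its open subsemilattices form a base of its topology. -/
/-- A topological space is *punctiform* if every non-empty compact connected subset
is a singleton. -/
def Punctiform (X : Type*) [TopologicalSpace X] : Prop :=
  ∀ K : Set X, IsCompact K → IsConnected K → ∃ a, K = {a}

/-- A topological semilattice is *Lawson* if its open subsemilattices form a base of
its topology. -/
def IsLawson (E : Type*) [SemilatticeInf E] [TopologicalSpace E] : Prop :=
  ∀ U : Set E, IsOpen U → ∀ x ∈ U,
    ∃ L : Set E, IsOpen L ∧ (∀ a ∈ L, ∀ b ∈ L, a ⊓ b ∈ L) ∧ x ∈ L ∧ L ⊆ U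

/-- In a locally compact Hausdorff punctiform space, compact open sets form a base. -/
lemma exists_compact_open_of_punctiform
    {E : Type*} [TopologicalSpace E] [T2Space E] [LocallyCompactSpace E]
    (hp : Punctiform E) {U : Set E} (hU : IsOpen U) {x : E} (hx : x ∈ U) :
    ∃ V : Set E, IsCompact V ∧ IsOpen V ∧ x ∈ V ∧ V ⊆ U := by
  obtain ⟨K, hKc, hxK, hKU⟩ := exists_compact_subset hU hx
  haveI : CompactSpace K := isCompact_iff_compactSpace.1 hKc
  haveI : TotallyDisconnectedSpace K := by
    rw [totallyDisconnectedSpace_iff_connectedComponent_singleton]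
    intro y
    have hconn : IsConnected (connectedComponent y) := isConnected_connectedComponent
    have hcomp : IsCompact (connectedComponent y) :=
      isClosed_connectedComponent.isCompact
    have hconnE : IsConnected ((↑) '' connectedComponent y : Set E) :=
      ⟨hconn.nonempty.image _, hconn.isPreconnected.image _
        continuous_subtype_val.continuousOn⟩
    have hcompE : IsCompact ((↑) '' connectedComponent y : Set E) :=
      hcomp.image continuous_subtype_val
    obtain ⟨a, ha⟩ := hp _ hcompE hconnE
    have hinj : Function.Injective ((↑) : K → E) := Subtype.val_injective
    have hsub : (connectedComponent y).Subsingleton := by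
      intro u hu v hv
      apply hinj
      have hu' : (u : E) ∈ ((↑) '' connectedComponent y : Set E) := ⟨u, hu, rfl⟩
      have hv' : (v : E) ∈ ((↑) '' connectedComponent y : Set E) := ⟨v, hv, rfl⟩
      rw [ha, Set.mem_singleton_iff] at hu' hv'
      rw [hu', hv']
    exact hsub.eq_singleton_of_mem mem_connectedComponent
  set u : Set K := ((↑) : K → E) ⁻¹' interior K with hu
  have hu_open : IsOpen u := isOpen_interior.preimage continuous_subtype_val
  have hxK' : (⟨x, interior_subset hxK⟩ : K) ∈ u := hxK
  obtain ⟨V, hVclopen, hxV, hVu⟩ := compact_exists_isClopen_in_isOpen hu_open hxK'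
  refine ⟨((↑) : K → E) '' V, ?_, ?_, ⟨⟨x, interior_subset hxK⟩, hxV, rfl⟩,
    fun a ⟨b, _, hb⟩ => hb ▸ hKU b.2⟩
  · exact (hVclopen.isClosed.isCompact).image continuous_subtype_val
  · obtain ⟨O, hO, hOV⟩ := isOpen_induced_iff.mp hVclopen.isOpen
    have himg : ((↑) : K → E) '' V = K ∩ O := by
      rw [← hOV]; exact Subtype.image_preimage_coe K O
    have h1 : ((↑) : K → E) '' V ⊆ interior K := fun a ⟨b, hbV, hb⟩ => hb ▸ hVu hbV
    have heq : ((↑) : K → E) '' V = interior K ∩ O := by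
      apply Set.Subset.antisymm
      · exact fun a ha => ⟨h1 ha, (himg ▸ ha).2⟩
      · intro a ⟨ha1, ha2⟩
        rw [himg]; exact ⟨interior_subset ha1, ha2⟩
    rw [heq]
    exact isOpen_interior.inter hO

/-- An open set of "elements whose inf with everything in a compact set lands in an
open set" is open. -/
lemma isOpen_setOf_inf_mapsTo
    {E : Type*} [SemilatticeInf E] [TopologicalSpace E] [ContinuousInf E]
    {W : Set E} (hWc : IsCompact W) {O : Set E} (hO : IsOpen O) :
    IsOpen {a : E | ∀ b ∈ W, a ⊓ b ∈ O} := by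
  open Topology in
  rw [isOpen_iff_mem_nhds]
  intro a ha
  have := hWc.eventually_forall_of_forall_eventually (x₀ := a)
    (P := fun p q => p ⊓ q ∈ O) ?_
  · exact this
  · intro b hb
    have hcont : Continuous fun z : E × E => z.1 ⊓ z.2 := continuous_inf
    have : (fun z : E × E => z.1 ⊓ z.2) ⁻¹' O ∈ 𝓝 (a, b) :=
      hcont.continuousAt.preimage_mem_nhds (hO.mem_nhds (ha b hb))
    exact this

/-- Every locally compact punctiform topological semilattice is Lawson. -/
theorem isLawson_of_locallyCompact_punctiform
    (E : Type*) [SemilatticeInf E] [TopologicalSpace E] [T2Space E] [ContinuousInf E]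
    [LocallyCompactSpace E] (hp : Punctiform E) : IsLawson E := by
  intro U hU x hx
  -- the retraction f b = x ⊓ b
  set f : E → E := fun b => x ⊓ b with hf
  have hfc : Continuous f := continuous_const.inf continuous_id
  have hff : ∀ b, f (f b) = f b := fun b => by simp [hf, ← inf_assoc]
  have hfx : f x = x := inf_idem x
  -- compact open V₁ with x ∈ V₁ ⊆ U
  obtain ⟨V₁, hV₁c, hV₁o, hxV₁, hV₁U⟩ := exists_compact_open_of_punctiform hp hU hx
  -- D = fixed points of f inside V₁
  set D : Set E := V₁ ∩ {b | f b = b} with hD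
  have hDclosed : IsClosed {b : E | f b = b} := isClosed_eq hfc continuous_id
  have hDc : IsCompact D := hV₁c.inter_right hDclosed
  have hxD : x ∈ D := ⟨hxV₁, hfx⟩
  -- cover D by compact open sets inside V₁ ∩ f⁻¹(V₁)
  have hopen : IsOpen (V₁ ∩ f ⁻¹' V₁) := hV₁o.inter (hV₁o.preimage hfc)
  have hmem : ∀ c ∈ D, c ∈ V₁ ∩ f ⁻¹' V₁ := by
    rintro c ⟨hc1, hc2⟩
    refine ⟨hc1, ?_⟩
    show f c ∈ V₁
    rw [hc2]; exact hc1
  choose! O hOc hOo hmemO hOsub using fun c (hc : c ∈ D) =>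
    exists_compact_open_of_punctiform hp hopen (hmem c hc)
  obtain ⟨t, htD, htfin, hcover⟩ := hDc.elim_finite_subcover_image
    (fun c hc => hOo c hc) (fun b hb => Set.mem_iUnion₂.2 ⟨b, hb, hmemO b hb⟩)
  -- W = union of the chosen compact opens
  set W : Set E := ⋃ c ∈ t, O c with hW
  have hWD : D ⊆ W := hcover
  have hWo : IsOpen W := isOpen_biUnion fun c hc => hOo c (htD hc)
  have hWcomp : IsCompact W := htfin.isCompact_biUnion fun c hc => hOc c (htD hc)
  have hWsub : W ⊆ V₁ ∩ f ⁻¹' V₁ := Set.iUnion₂_subset fun c hc => hOsub c (htD hc)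
  have hxW : x ∈ W := hWD hxD
  -- W is invariant under f
  have hWinv : ∀ b ∈ W, f b ∈ W := by
    intro b hb
    have hb' : f b ∈ V₁ := (hWsub hb).2
    have : f b ∈ D := ⟨hb', hff b⟩
    exact hWD this
  -- the open subsemilattice
  refine ⟨W ∩ {a | ∀ b ∈ W, a ⊓ b ∈ W}, hWo.inter (isOpen_setOf_inf_mapsTo hWcomp hWo),
    ?_, ⟨hxW, fun b hb => hWinv b hb⟩, fun a ha => hV₁U (hWsub ha.1).1⟩
  rintro a ⟨haW, ha⟩ b ⟨hbW, hb⟩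
  refine ⟨ha b hbW, fun c hc => ?_⟩
  rw [inf_assoc]
  exact ha _ (hb c hc)
end

section
/- Every lower locally compact punctiform topological semilattice is a U_0-semilattice. -/
/-- A topological semilattice is *lower locally compact* if every point `x` has a
closed neighborhood `O` such that `O ∩ ↓x` is compact. -/
def LowerLocallyCompact (E : Type*) [SemilatticeInf E] [TopologicalSpace E] : Prop :=
  ∀ x : E, ∃ O : Set E, O ∈ nhds x ∧ IsClosed O ∧ IsCompact (O ∩ Set.Iic x)

/-- A topological semilattice is a *U₀-semilattice* if for every open `U` and every
`x ∈ U` there is a locally minimal point `y ∈ U` (i.e. `↑y` is open) with `y ≤ x`. -/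
def IsU0Semilattice (E : Type*) [SemilatticeInf E] [TopologicalSpace E] : Prop :=
  ∀ U : Set E, IsOpen U → ∀ x ∈ U, ∃ y ∈ U, IsOpen (Set.Ici y) ∧ y ≤ x

section Aux

variable {E : Type*} [SemilatticeInf E] [TopologicalSpace E] [T2Space E] [ContinuousInf E]

lemma aux_isClosed_Iic (a : E) : IsClosed (Set.Iic a) := by
  have h : Set.Iic a = {z : E | z ⊓ a = z} := by
    ext z; simp [Set.mem_Iic, inf_eq_left]
  rw [h]
  exact isClosed_eq (continuous_id.inf continuous_const) continuous_id

/-- A nonempty compact subset of a topological semilattice has a minimal element below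
any given element. -/
lemma aux_exists_minimal {V : Set E} (hV : IsCompact V) {x : E} (hx : x ∈ V) :
    ∃ y ∈ V, y ≤ x ∧ ∀ v ∈ V, v ≤ y → v = y := by
  have ih : ∀ c ⊆ (OrderDual.ofDual ⁻¹' V : Set Eᵒᵈ), IsChain (· ≤ ·) c → ∀ y ∈ c,
      ∃ ub ∈ (OrderDual.ofDual ⁻¹' V : Set Eᵒᵈ), ∀ z ∈ c, z ≤ ub := by
    intro c hcV hc y hy
    have hne : Nonempty c := ⟨⟨y, hy⟩⟩
    have key : (⋂ i : c, (V ∩ Set.Iic (OrderDual.ofDual (i : Eᵒᵈ)))).Nonempty := by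
      apply IsCompact.nonempty_iInter_of_directed_nonempty_isCompact_isClosed
      · rintro ⟨a, ha⟩ ⟨b, hb⟩
        rcases hc.total ha hb with hab | hab
        · exact ⟨⟨b, hb⟩,
            Set.inter_subset_inter_right _
              (Set.Iic_subset_Iic.mpr (OrderDual.ofDual_le_ofDual.mpr hab)),
            Set.Subset.rfl⟩
        · exact ⟨⟨a, ha⟩, Set.Subset.rfl,
            Set.inter_subset_inter_right _
              (Set.Iic_subset_Iic.mpr (OrderDual.ofDual_le_ofDual.mpr hab))⟩
      · rintro ⟨a, ha⟩
        exact ⟨OrderDual.ofDual a, hcV ha, le_rfl⟩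
      · intro i
        exact hV.inter_right (aux_isClosed_Iic _)
      · intro i
        exact (hV.isClosed).inter (aux_isClosed_Iic _)
    obtain ⟨z, hz⟩ := key
    refine ⟨OrderDual.toDual z, ?_, ?_⟩
    · have := Set.mem_iInter.mp hz ⟨y, hy⟩
      exact this.1
    · intro w hw
      exact (Set.mem_iInter.mp hz ⟨w, hw⟩).2
  obtain ⟨m, hxm, hmV, hmax⟩ :=
    zorn_le_nonempty₀ (α := Eᵒᵈ) (OrderDual.ofDual ⁻¹' V) ih (OrderDual.toDual x) hx
  exact ⟨OrderDual.ofDual m, hmV, hxm, fun v hv hvm =>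
    le_antisymm hvm (hmax (y := OrderDual.toDual v) hv hvm)⟩

end Aux

/-- Every lower locally compact punctiform topological semilattice is a
U₀-semilattice. -/
theorem isU0Semilattice_of_lowerLocallyCompact_punctiform
    (E : Type*) [SemilatticeInf E] [TopologicalSpace E] [T2Space E] [ContinuousInf E]
    (hl : LowerLocallyCompact E) (hp : Punctiform E) : IsU0Semilattice E := by
  intro U hU x hxU
  obtain ⟨O, hOn, hOc, hK⟩ := hl x
  set K : Set E := O ∩ Set.Iic x with hKdef
  have hxO : x ∈ interior O := mem_interior_iff_mem_nhds.mpr hOn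
  have hxK : x ∈ K := ⟨interior_subset hxO, le_rfl⟩
  have hKcl : IsClosed K := hOc.inter (aux_isClosed_Iic x)
  haveI : CompactSpace K := isCompact_iff_compactSpace.mp hK
  haveI : TotallyDisconnectedSpace K := by
    constructor
    intro t _ ht
    rcases t.eq_empty_or_nonempty with rfl | hne
    · exact Set.subsingleton_empty
    have hS : IsPreconnected (Subtype.val '' t) :=
      ht.image _ continuous_subtype_val.continuousOn
    have hsubK : Subtype.val '' t ⊆ K := by
      rintro _ ⟨p, _, rfl⟩; exact p.2
    have hclK : closure (Subtype.val '' t) ⊆ K := hKcl.closure_subset_iff.mpr hsubK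
    have hcomp : IsCompact (closure (Subtype.val '' t)) :=
      hK.of_isClosed_subset isClosed_closure hclK
    have hconn : IsConnected (closure (Subtype.val '' t)) :=
      ⟨(hne.image _).closure, hS.closure⟩
    obtain ⟨a, ha⟩ := hp _ hcomp hconn
    intro p hp' q hq'
    have hpa : (p : E) = a := by
      have : (p : E) ∈ closure (Subtype.val '' t) :=
        subset_closure ⟨p, hp', rfl⟩
      rwa [ha, Set.mem_singleton_iff] at this
    have hqa : (q : E) = a := by
      have : (q : E) ∈ closure (Subtype.val '' t) :=
        subset_closure ⟨q, hq', rfl⟩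
      rwa [ha, Set.mem_singleton_iff] at this
    exact Subtype.ext (hpa.trans hqa.symm)
  -- clopen basis of K
  have hbasis := loc_compact_Haus_tot_disc_of_zero_dim (H := K)
  have hopen : IsOpen (Subtype.val ⁻¹' (U ∩ interior O) : Set K) :=
    (hU.inter isOpen_interior).preimage continuous_subtype_val
  have hxmem : (⟨x, hxK⟩ : K) ∈ (Subtype.val ⁻¹' (U ∩ interior O) : Set K) :=
    ⟨hxU, hxO⟩
  obtain ⟨V', hV'clopen, hxV', hV'sub⟩ :=
    hbasis.mem_nhds_iff.mp (hopen.mem_nhds hxmem)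
  obtain ⟨W, hWopen, hWeq⟩ := isOpen_induced_iff.mp hV'clopen.2
  set W' : Set E := W ∩ (U ∩ interior O) with hW'def
  have hW'open : IsOpen W' := hWopen.inter (hU.inter isOpen_interior)
  set V : Set E := Subtype.val '' V' with hVdef
  have hVcomp : IsCompact V :=
    (hV'clopen.1.isCompact).image continuous_subtype_val
  have hVW : V = W' ∩ Set.Iic x := by
    apply Set.Subset.antisymm
    · rintro _ ⟨p, hpV', rfl⟩
      have hpW : (p : E) ∈ W := by
        rw [← hWeq] at hpV'; exact hpV'
      have hpUO : (p : E) ∈ U ∩ interior O := hV'sub hpV'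
      exact ⟨⟨hpW, hpUO⟩, p.2.2⟩
    · rintro z ⟨⟨hzW, hzU, hzO⟩, hzx⟩
      have hzK : z ∈ K := ⟨interior_subset hzO, hzx⟩
      refine ⟨⟨z, hzK⟩, ?_, rfl⟩
      rw [← hWeq]; exact hzW
  have hxV : x ∈ V := ⟨⟨x, hxK⟩, hxV', rfl⟩
  obtain ⟨y, hyV, hyx, hymin⟩ := aux_exists_minimal hVcomp hxV
  have hyW' : y ∈ W' := (hVW ▸ hyV).1
  have hyU : y ∈ U := hyW'.2.1
  refine ⟨y, hyU, ?_, hyx⟩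
  have hIci : Set.Ici y = (fun w => w ⊓ y) ⁻¹' W' := by
    apply Set.Subset.antisymm
    · intro z hz
      have : z ⊓ y = y := inf_eq_right.mpr hz
      simpa [Set.mem_preimage, this] using hyW'
    · intro w hw
      have h1 : w ⊓ y ∈ W' := hw
      have h2 : w ⊓ y ∈ V := by
        rw [hVW]; exact ⟨h1, le_trans inf_le_right hyx⟩
      have h3 : w ⊓ y = y := hymin _ h2 inf_le_right
      exact Set.mem_Ici.mpr (h3 ▸ inf_le_left)
  rw [hIci]
  exact hW'open.preimage (continuous_id.inf continuous_const)
end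

section
/- Every lower locally compact Lawson topological semilattice is a U-semilattice. -/
/-- A topological semilattice is a *U-semilattice* if for every open set `U` and every
`x ∈ U` there is `y ∈ U` with `y ≪ x`, i.e. `x ∈ Int(↑y)`. -/
def IsUSemilattice (E : Type*) [SemilatticeInf E] [TopologicalSpace E] : Prop :=
  ∀ U : Set E, IsOpen U → ∀ x ∈ U, ∃ y ∈ U, x ∈ interior (Set.Ici y)

private lemma iic_closed {E : Type*} [SemilatticeInf E] [TopologicalSpace E] [T2Space E]
    [ContinuousInf E] (a : E) : IsClosed (Set.Iic a) := by
  have : Set.Iic a = {z : E | z ⊓ a = z} := by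
    ext z; simp [inf_eq_left]
  rw [this]
  exact isClosed_eq (continuous_id.inf continuous_const) continuous_id

/-- Every lower locally compact Lawson topological semilattice is a U-semilattice. -/
theorem isUSemilattice_of_lowerLocallyCompact_lawson
    (E : Type*) [SemilatticeInf E] [TopologicalSpace E] [T2Space E] [ContinuousInf E]
    (hl : LowerLocallyCompact E) (hL : IsLawson E) : IsUSemilattice E := by
  intro U hU x hxU
  obtain ⟨O, hOx, hOc, hKcpt⟩ := hl x
  set K : Set E := O ∩ Set.Iic x with hK
  have hKclosed : IsClosed K := hOc.inter (iic_closed x)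
  -- separate x from the compact set K \ U
  have hC : IsCompact (K \ U) := hKcpt.diff hU
  have hdis : Disjoint ({x} : Set E) (K \ U) := by
    simp only [Set.disjoint_singleton_left, Set.mem_diff, not_and, not_not]
    exact fun _ => hxU
  obtain ⟨G, H, hGo, hHo, hxG, hKH, hGH⟩ :=
    SeparatedNhds.of_isCompact_isCompact isCompact_singleton hC hdis
  -- Lawson: open subsemilattice L with x ∈ L ⊆ U ∩ interior O ∩ G
  have hopen : IsOpen (U ∩ interior O ∩ G) := (hU.inter isOpen_interior).inter hGo
  have hx' : x ∈ U ∩ interior O ∩ G :=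
    ⟨⟨hxU, mem_interior_iff_mem_nhds.2 hOx⟩, hxG (Set.mem_singleton x)⟩
  obtain ⟨L, hLo, hLsemi, hxL, hLUG⟩ := hL _ hopen x hx'
  have hLO : L ⊆ O := fun z hz => interior_subset (hLUG hz).1.2
  -- S := closure L ∩ ↓x is a nonempty compact subsemilattice
  set S : Set E := closure L ∩ Set.Iic x with hS
  have hSK : S ⊆ K := fun z hz => ⟨closure_minimal hLO hOc hz.1, hz.2⟩
  have hScl : IsClosed S := isClosed_closure.inter (iic_closed x)
  have hScpt : IsCompact S := hKcpt.of_isClosed_subset hScl hSK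
  have hxS : x ∈ S := ⟨subset_closure hxL, le_refl x⟩
  have hclLsemi : ∀ a ∈ closure L, ∀ b ∈ closure L, a ⊓ b ∈ closure L := by
    intro a ha b hb
    have hmap : Set.MapsTo (fun p : E × E => p.1 ⊓ p.2) (L ×ˢ L) (closure L) := by
      intro p hp
      exact subset_closure (hLsemi p.1 hp.1 p.2 hp.2)
    have := hmap.closure (continuous_fst.inf continuous_snd)
    have hmem : (a, b) ∈ closure (L ×ˢ L) := by
      rw [closure_prod_eq]; exact ⟨ha, hb⟩
    have h3 := this hmem
    rw [closure_closure] at h3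
    exact h3
  have hSsemi : ∀ a ∈ S, ∀ b ∈ S, a ⊓ b ∈ S := fun a ha b hb =>
    ⟨hclLsemi a ha.1 b hb.1, le_trans inf_le_left ha.2⟩
  -- S has a minimum m
  have hnecls : Nonempty S := ⟨⟨x, hxS⟩⟩
  obtain ⟨m, hm⟩ :=
    IsCompact.nonempty_iInter_of_directed_nonempty_isCompact_isClosed
      (fun s : S => S ∩ Set.Iic (s : E))
      (fun s t => ⟨⟨s ⊓ t, hSsemi s s.2 t t.2⟩, by
        constructor <;> intro z hz <;>
          exact ⟨hz.1, le_trans hz.2 (by simp)⟩⟩)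
      (fun s => ⟨s, s.2, le_refl _⟩)
      (fun s => hScpt.of_isClosed_subset (hScl.inter (iic_closed _)) Set.inter_subset_left)
      (fun s => hScl.inter (iic_closed _))
  have hmS : m ∈ S := (Set.mem_iInter.1 hm ⟨x, hxS⟩).1
  have hmin : ∀ s ∈ S, m ≤ s := fun s hs => (Set.mem_iInter.1 hm ⟨s, hs⟩).2
  have hmx : m ≤ x := hmS.2
  -- L ⊆ ↑m, hence x ∈ interior (↑m)
  have hLm : L ⊆ Set.Ici m := fun v hv =>
    le_trans (hmin (v ⊓ x) ⟨subset_closure (hLsemi v hv x hxL), inf_le_right⟩) inf_le_left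
  have hxint : x ∈ interior (Set.Ici m) :=
    mem_interior.2 ⟨L, hLm, hLo, hxL⟩
  -- m ∈ closure (L ∩ ↓x)
  have hmcl : m ∈ closure (L ∩ Set.Iic x) := by
    have hmapsto : Set.MapsTo (fun z : E => z ⊓ x) L (L ∩ Set.Iic x) := fun z hz =>
      ⟨hLsemi z hz x hxL, inf_le_right⟩
    have := hmapsto.closure (continuous_id.inf continuous_const)
    have h2 : m ⊓ x ∈ closure (L ∩ Set.Iic x) := this hmS.1
    rwa [show m ⊓ x = m from inf_eq_left.2 hmx] at h2
  -- m ∈ U : closure (L ∩ ↓x) ⊆ K and avoids H ⊇ K \ U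
  have hLKG : L ∩ Set.Iic x ⊆ G := fun z hz => (hLUG hz.1).2
  have hmG : m ∈ closure G := closure_mono hLKG hmcl
  have hmHc : m ∉ H := fun hmH =>
    Set.disjoint_left.1 (hGH.closure_left hHo) hmG hmH
  have hmK : m ∈ K := by
    have hsub : L ∩ Set.Iic x ⊆ K := fun z hz => ⟨hLO hz.1, hz.2⟩
    exact (closure_minimal hsub hKclosed) hmcl
  have hmU : m ∈ U := by
    by_contra hmu
    exact hmHc (hKH ⟨hmK, hmu⟩)
  exact ⟨m, hmU, hxint⟩
end

section
/- If E is a U-semilattice, then E is 𝕀-separated: for any two distinct points x, y ∈ E there exists a continuous semilattice homomorphism h : E → [0,1] (where [0,1] carries the operation min) with h(x) ≠ h(y). -/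
open Set Topology

set_option linter.unusedSectionVars false
set_option maxHeartbeats 1000000

section Aux

variable {E : Type*} [SemilatticeInf E] [TopologicalSpace E] [T2Space E] [ContinuousInf E]

lemma myIsClosed_Ici (p : E) : IsClosed (Set.Ici p) := by
  have : Set.Ici p = {z : E | p ⊓ z = p} := by
    ext z; simp [Set.mem_Ici, inf_eq_left]
  rw [this]
  exact isClosed_eq (continuous_const.inf continuous_id) continuous_const

lemma myIsClosed_Iic (p : E) : IsClosed (Set.Iic p) := by
  have : Set.Iic p = {z : E | z ⊓ p = z} := by
    ext z; simp [Set.mem_Iic, inf_eq_left]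
  rw [this]
  exact isClosed_eq (continuous_id.inf continuous_const) continuous_id

lemma interior_Ici_upper (p : E) {z w : E} (hz : z ∈ interior (Set.Ici p))
    (hzw : z ≤ w) : w ∈ interior (Set.Ici p) := by
  set f : E → E := fun u => u ⊓ z with hf
  have hfc : Continuous f := continuous_id.inf continuous_const
  have hV : IsOpen (f ⁻¹' interior (Set.Ici p)) := isOpen_interior.preimage hfc
  have hwV : w ∈ f ⁻¹' interior (Set.Ici p) := by
    simp only [Set.mem_preimage, hf]
    rwa [inf_eq_right.mpr hzw]
  have hsub : f ⁻¹' interior (Set.Ici p) ⊆ Set.Ici p := by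
    intro u hu
    have : p ≤ u ⊓ z := interior_subset hu
    exact le_trans this inf_le_left
  exact interior_maximal hsub hV hwV

end Aux


def ChainAux {E : Type*} [SemilatticeInf E] [TopologicalSpace E]
    (U : Set E) (x : E) (n : ℕ) (c : ℕ → E) : Prop :=
  (∀ k, 1 ≤ k → k ≤ 2 ^ n → c k ∈ U) ∧
  (∀ k, 1 ≤ k → k + 1 ≤ 2 ^ n → c (k + 1) ∈ interior (Set.Ici (c k))) ∧
  x ∈ interior (Set.Ici (c (2 ^ n)))

lemma chainAux_step {E : Type*} [SemilatticeInf E] [TopologicalSpace E]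
    (hU : IsUSemilattice E) {U : Set E} {x : E} (hUo : IsOpen U)
    (n : ℕ) (c : ℕ → E) (hc : ChainAux U x n c) :
    ∃ c', ChainAux U x (n + 1) c' ∧ ∀ k, c' (2 * k) = c k := by
  obtain ⟨hcU, hcI, hcx⟩ := hc
  have h1 : (1 : ℕ) ≤ 2 ^ n := Nat.one_le_two_pow
  have hsel : ∀ j : ℕ, ∃ e : E,
      (j = 0 → e ∈ U ∧ c 1 ∈ interior (Set.Ici e)) ∧
      (1 ≤ j → j + 1 ≤ 2 ^ n →
        (e ∈ U ∧ e ∈ interior (Set.Ici (c j))) ∧ c (j + 1) ∈ interior (Set.Ici e)) := by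
    intro j
    rcases Nat.eq_zero_or_pos j with hj | hj
    · subst hj
      obtain ⟨e, heU, he⟩ := hU U hUo (c 1) (hcU 1 le_rfl h1)
      exact ⟨e, fun _ => ⟨heU, he⟩, fun h => absurd h (by omega)⟩
    · by_cases hj2 : j + 1 ≤ 2 ^ n
      · have hW : IsOpen (U ∩ interior (Set.Ici (c j))) := hUo.inter isOpen_interior
        have hz : c (j + 1) ∈ U ∩ interior (Set.Ici (c j)) :=
          ⟨hcU (j + 1) (by omega) hj2, hcI j hj hj2⟩
        obtain ⟨e, heW, he⟩ := hU _ hW _ hz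
        exact ⟨e, fun h => absurd h (by omega), fun _ _ => ⟨⟨heW.1, heW.2⟩, he⟩⟩
      · exact ⟨c 1, fun h => absurd h (by omega), fun _ h => absurd h hj2⟩
  choose sel hsel0 hsel1 using hsel
  refine ⟨fun k => if k % 2 = 0 then c (k / 2) else sel (k / 2), ⟨?_, ?_, ?_⟩, ?_⟩
  · intro k hk1 hk2
    rcases Nat.even_or_odd k with ⟨j, hj⟩ | ⟨j, hj⟩
    · have h0 : k % 2 = 0 := by omega
      have hq : k / 2 = j := by omega
      simp only [h0, if_pos, hq]
      exact hcU j (by omega) (by rw [pow_succ] at hk2; omega)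
    · have h0 : ¬ (k % 2 = 0) := by omega
      have hq : k / 2 = j := by omega
      simp only [h0, if_neg, if_false, hq]
      rcases Nat.eq_zero_or_pos j with hj0 | hj0
      · subst hj0; exact (hsel0 0 rfl).1
      · exact ((hsel1 j hj0 (by rw [pow_succ] at hk2; omega)).1).1
  · intro k hk1 hk2
    rcases Nat.even_or_odd k with ⟨j, hj⟩ | ⟨j, hj⟩
    · have h0 : k % 2 = 0 := by omega
      have h10 : ¬ ((k + 1) % 2 = 0) := by omega
      have hq : k / 2 = j := by omega
      have hq1 : (k + 1) / 2 = j := by omega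
      simp only [h0, h10, if_pos, if_neg, if_false, hq, hq1]
      exact ((hsel1 j (by omega) (by rw [pow_succ] at hk2; omega)).1).2
    · have h0 : ¬ (k % 2 = 0) := by omega
      have h10 : (k + 1) % 2 = 0 := by omega
      have hq : k / 2 = j := by omega
      have hq1 : (k + 1) / 2 = j + 1 := by omega
      simp only [h0, h10, if_pos, if_neg, if_false, hq, hq1]
      rcases Nat.eq_zero_or_pos j with hj0 | hj0
      · subst hj0; exact (hsel0 0 rfl).2
      · exact (hsel1 j hj0 (by rw [pow_succ] at hk2; omega)).2
  · have he : 2 ^ (n + 1) % 2 = 0 := by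
      rw [pow_succ]; omega
    have hq : 2 ^ (n + 1) / 2 = 2 ^ n := by
      rw [pow_succ]; omega
    simp only [he, if_pos, hq]
    exact hcx
  · intro k
    have h0 : (2 * k) % 2 = 0 := by omega
    have hq : (2 * k) / 2 = k := by omega
    simp only [h0, if_pos, hq]

lemma key_lemma {E : Type*} [SemilatticeInf E] [TopologicalSpace E] [T2Space E] [ContinuousInf E]
    (hU : IsUSemilattice E) :
    ∀ x y : E, ¬ x ≤ y →
      ∃ h : E → unitInterval, Continuous h ∧
        (∀ a b : E, h (a ⊓ b) = min (h a) (h b)) ∧ h x ≠ h y := by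
  intro x y hxy
  set U : Set E := (Set.Iic y)ᶜ with hUdef
  have hUo : IsOpen U := (myIsClosed_Iic y).isOpen_compl
  have hxU : x ∈ U := by simpa [hUdef] using hxy
  clear hxy
  obtain ⟨e1, he1U, he1⟩ := hU U hUo x hxU
  have hc0 : ChainAux U x 0 (fun _ => e1) := by
    refine ⟨fun k _ _ => he1U, fun k hk1 hk2 => by omega, by simpa using he1⟩
  have step' : ∀ (n : ℕ) (c : ℕ → E), ∃ c',
      ChainAux U x n c → (ChainAux U x (n + 1) c' ∧ ∀ k, c' (2 * k) = c k) := by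
    intro n c
    by_cases h : ChainAux U x n c
    · obtain ⟨c', h1, h2⟩ := chainAux_step hU hUo n c h
      exact ⟨c', fun _ => ⟨h1, h2⟩⟩
    · exact ⟨c, fun hc => absurd hc h⟩
  choose stepF hstepF using step'
  set cs : ℕ → ℕ → E := fun n => Nat.rec (fun _ => e1) stepF n with hcsdef
  have hchain : ∀ n, ChainAux U x n (cs n) := by
    intro n
    induction n with
    | zero => exact hc0
    | succ n ih => exact (hstepF n (cs n) ih).1
  have hcompat : ∀ n k, cs (n + 1) (2 * k) = cs n k :=
    fun n k => (hstepF n (cs n) (hchain n)).2 k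
  have hlift : ∀ m n k, cs (n + m) (2 ^ m * k) = cs n k := by
    intro m
    induction m with
    | zero => intro n k; simp
    | succ m ih =>
      intro n k
      rw [show n + (m + 1) = (n + m) + 1 by ring, show 2 ^ (m + 1) * k = 2 * (2 ^ m * k) by ring]
      rw [hcompat (n + m) (2 ^ m * k), ih n k]
  have hstrict : ∀ n i j, 1 ≤ i → i < j → j ≤ 2 ^ n →
      cs n j ∈ interior (Set.Ici (cs n i)) := by
    intro n i j hi hij hj
    obtain ⟨d, rfl⟩ : ∃ d, j = i + 1 + d := ⟨j - i - 1, by omega⟩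
    clear hij
    induction d with
    | zero => exact (hchain n).2.1 i hi (by simpa using hj)
    | succ d ih =>
      have hmem := ih (by omega)
      have hcons := (hchain n).2.1 (i + 1 + d) (by omega) (by omega)
      exact interior_Ici_upper _ hmem (interior_subset hcons)
  have hmono : ∀ n i j, 1 ≤ i → i ≤ j → j ≤ 2 ^ n → cs n i ≤ cs n j := by
    intro n i j hi hij hj
    rcases eq_or_lt_of_le hij with rfl | h
    · exact le_rfl
    · exact interior_subset (hstrict n i j hi h hj)
  have hcross_le : ∀ (n k m k' : ℕ), 1 ≤ k → k ≤ 2 ^ n → 1 ≤ k' → k' ≤ 2 ^ m →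
      (k : ℝ) / 2 ^ n ≤ (k' : ℝ) / 2 ^ m → cs n k ≤ cs m k' := by
    intro n k m k' hk1 hk2 hk1' hk2' hle
    have hnat : 2 ^ m * k ≤ 2 ^ n * k' := by
      rw [div_le_div_iff₀ (by positivity) (by positivity)] at hle
      have : ((2 ^ m * k : ℕ) : ℝ) ≤ ((2 ^ n * k' : ℕ) : ℝ) := by push_cast; linarith
      exact_mod_cast this
    have e1 : cs (n + m) (2 ^ m * k) = cs n k := hlift m n k
    have e2 : cs (n + m) (2 ^ n * k') = cs m k' := by rw [add_comm n m]; exact hlift n m k'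
    rw [← e1, ← e2]
    refine hmono (n + m) _ _ ?_ hnat ?_
    · calc 1 = 1 * 1 := by ring
      _ ≤ 2 ^ m * k := Nat.mul_le_mul Nat.one_le_two_pow hk1
    · rw [pow_add]; exact Nat.mul_le_mul le_rfl hk2'
  have hcross_lt : ∀ (n k m k' : ℕ), 1 ≤ k → k ≤ 2 ^ n → 1 ≤ k' → k' ≤ 2 ^ m →
      (k : ℝ) / 2 ^ n < (k' : ℝ) / 2 ^ m → cs m k' ∈ interior (Set.Ici (cs n k)) := by
    intro n k m k' hk1 hk2 hk1' hk2' hlt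
    have hnat : 2 ^ m * k < 2 ^ n * k' := by
      rw [div_lt_div_iff₀ (by positivity) (by positivity)] at hlt
      have : ((2 ^ m * k : ℕ) : ℝ) < ((2 ^ n * k' : ℕ) : ℝ) := by push_cast; linarith
      exact_mod_cast this
    have e1 : cs (n + m) (2 ^ m * k) = cs n k := hlift m n k
    have e2 : cs (n + m) (2 ^ n * k') = cs m k' := by rw [add_comm n m]; exact hlift n m k'
    rw [← e1, ← e2]
    refine hstrict (n + m) _ _ ?_ hnat ?_
    · calc 1 = 1 * 1 := by ring
      _ ≤ 2 ^ m * k := Nat.mul_le_mul Nat.one_le_two_pow hk1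
    · rw [pow_add]; exact Nat.mul_le_mul le_rfl hk2'
  -- the sup function
  set S : E → Set ℝ := fun a =>
    {t : ℝ | ∃ n k : ℕ, 1 ≤ k ∧ k ≤ 2 ^ n ∧ t = (k : ℝ) / 2 ^ n ∧ cs n k ≤ a} with hSdef
  set g : E → ℝ := fun a => sSup (insert 0 (S a)) with hgdef
  have hbdd : ∀ a, BddAbove (insert (0:ℝ) (S a)) := by
    intro a
    refine ⟨1, ?_⟩
    rintro t (rfl | ⟨n, k, hk1, hk2, rfl, _⟩)
    · norm_num
    · rw [div_le_one (by positivity)]; exact_mod_cast hk2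
  have hne : ∀ a, (insert (0:ℝ) (S a)).Nonempty := fun a => ⟨0, Set.mem_insert _ _⟩
  have hg0 : ∀ a, 0 ≤ g a := fun a => le_csSup (hbdd a) (Set.mem_insert _ _)
  have hg1 : ∀ a, g a ≤ 1 := by
    intro a
    refine csSup_le (hne a) ?_
    rintro t (rfl | ⟨n, k, hk1, hk2, rfl, _⟩)
    · norm_num
    · rw [div_le_one (by positivity)]; exact_mod_cast hk2
  have hmemS_le : ∀ a t, t ∈ S a → t ≤ g a :=
    fun a t ht => le_csSup (hbdd a) (Set.mem_insert_of_mem _ ht)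
  have hSmono : ∀ {a b : E}, a ≤ b → S a ⊆ S b := by
    rintro a b hab t ⟨n, k, h1, h2, rfl, hle⟩
    exact ⟨n, k, h1, h2, rfl, hle.trans hab⟩
  have hgmono : Monotone g := fun a b hab =>
    csSup_le_csSup (hbdd b) (hne a) (Set.insert_subset_insert (hSmono hab))
  have hgx : g x = 1 := by
    have h1x : (1 : ℝ) ∈ S x := by
      refine ⟨0, 1, le_rfl, le_rfl, by norm_num, ?_⟩
      have := (hchain 0).2.2
      exact interior_subset this
    exact le_antisymm (hg1 x) (hmemS_le x 1 h1x)
  have hgy : g y = 0 := by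
    refine le_antisymm ?_ (hg0 y)
    refine csSup_le (hne y) ?_
    rintro t (rfl | ⟨n, k, h1, h2, rfl, hle⟩)
    · exact le_rfl
    · exact absurd (Set.mem_Iic.mpr hle) ((hchain n).1 k h1 h2)
  have hginf : ∀ a b, g (a ⊓ b) = min (g a) (g b) := by
    intro a b
    refine le_antisymm (le_min (hgmono inf_le_left) (hgmono inf_le_right)) ?_
    refine le_of_forall_lt fun c hc => ?_
    obtain ⟨t, htm, hct⟩ := exists_lt_of_lt_csSup (hne a) (lt_of_lt_of_le hc (min_le_left _ _))
    obtain ⟨t', htm', hct'⟩ := exists_lt_of_lt_csSup (hne b) (lt_of_lt_of_le hc (min_le_right _ _))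
    rcases htm with rfl | ⟨n, k, h1, h2, rfl, hle⟩
    · exact lt_of_lt_of_le hct (hg0 _)
    rcases htm' with rfl | ⟨n', k', h1', h2', rfl, hle'⟩
    · exact lt_of_lt_of_le hct' (hg0 _)
    rcases le_total ((k : ℝ) / 2 ^ n) ((k' : ℝ) / 2 ^ n') with hcmp | hcmp
    · have hcc : cs n k ≤ cs n' k' := hcross_le n k n' k' h1 h2 h1' h2' hcmp
      exact lt_of_lt_of_le hct (hmemS_le _ _ ⟨n, k, h1, h2, rfl, le_inf hle (hcc.trans hle')⟩)
    · have hcc : cs n' k' ≤ cs n k := hcross_le n' k' n k h1' h2' h1 h2 hcmp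
      exact lt_of_lt_of_le hct' (hmemS_le _ _ ⟨n', k', h1', h2', rfl, le_inf (hcc.trans hle) hle'⟩)
  have hdyadic : ∀ u v : ℝ, 0 ≤ u → u < v →
      ∃ m j : ℕ, 1 ≤ j ∧ u < (j : ℝ) / 2 ^ m ∧ (j : ℝ) / 2 ^ m < v := by
    intro u v hu huv
    have hvu : (0 : ℝ) < v - u := by linarith
    obtain ⟨m, hm⟩ := pow_unbounded_of_one_lt ((v - u)⁻¹) (one_lt_two (α := ℝ))
    have h2m : (0 : ℝ) < 2 ^ m := by positivity
    have key : 1 < (v - u) * 2 ^ m := by nlinarith [mul_inv_cancel₀ (ne_of_gt hvu)]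
    refine ⟨m, ⌊u * 2 ^ m⌋₊ + 1, by omega, ?_, ?_⟩
    · rw [lt_div_iff₀ h2m]
      have := Nat.lt_floor_add_one (u * 2 ^ m)
      push_cast
      linarith
    · rw [div_lt_iff₀ h2m]
      have hfl : (⌊u * 2 ^ m⌋₊ : ℝ) ≤ u * 2 ^ m := Nat.floor_le (by positivity)
      push_cast
      linarith
  have hgcont : Continuous g := by
    have hIoi : ∀ c : ℝ, IsOpen (g ⁻¹' Set.Ioi c) := by
      intro c
      rw [isOpen_iff_forall_mem_open]
      intro a ha
      simp only [Set.mem_preimage, Set.mem_Ioi] at ha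
      rcases lt_or_ge c 0 with hc | hc
      · exact ⟨Set.univ, fun b _ => lt_of_lt_of_le hc (hg0 b), isOpen_univ, Set.mem_univ a⟩
      · obtain ⟨t, htm, hct⟩ := exists_lt_of_lt_csSup (hne a) ha
        rcases htm with rfl | ⟨n, k, h1, h2, rfl, hle⟩
        · linarith
        · obtain ⟨m, j, hj1, hcj, hjt⟩ := hdyadic c ((k : ℝ) / 2 ^ n) hc hct
          have hj2 : j ≤ 2 ^ m := by
            have h2' : (j : ℝ) / 2 ^ m < 1 := lt_of_lt_of_le hjt (by
              rw [div_le_one (by positivity)]; exact_mod_cast h2)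
            rw [div_lt_one (by positivity)] at h2'
            have : j < 2 ^ m := by exact_mod_cast h2'
            omega
          refine ⟨interior (Set.Ici (cs m j)), ?_, isOpen_interior, ?_⟩
          · intro b hb
            have hcb : cs m j ≤ b := interior_subset hb
            simp only [Set.mem_preimage, Set.mem_Ioi]
            exact lt_of_lt_of_le hcj (hmemS_le _ _ ⟨m, j, hj1, hj2, rfl, hcb⟩)
          · exact interior_Ici_upper _ (hcross_lt m j n k hj1 hj2 h1 h2 hjt) hle
    have hIio : ∀ c : ℝ, IsOpen (g ⁻¹' Set.Iio c) := by
      intro c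
      rw [isOpen_iff_forall_mem_open]
      intro a ha
      simp only [Set.mem_preimage, Set.mem_Iio] at ha
      rcases le_or_gt c 1 with hc | hc
      · obtain ⟨m, j, hj1, haj, hjc⟩ := hdyadic (g a) c (hg0 a) ha
        have hj2 : j ≤ 2 ^ m := by
          have h2' : (j : ℝ) / 2 ^ m < 1 := lt_of_lt_of_le hjc hc
          rw [div_lt_one (by positivity)] at h2'
          have : j < 2 ^ m := by exact_mod_cast h2'
          omega
        refine ⟨(Set.Ici (cs m j))ᶜ, ?_, (myIsClosed_Ici _).isOpen_compl, ?_⟩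
        · intro b hb
          simp only [Set.mem_compl_iff, Set.mem_Ici] at hb
          simp only [Set.mem_preimage, Set.mem_Iio]
          have hb' : g b ≤ (j : ℝ) / 2 ^ m := by
            refine csSup_le (hne b) ?_
            rintro t (rfl | ⟨n', k', h1', h2', rfl, hle'⟩)
            · positivity
            · by_contra hgt
              push_neg at hgt
              exact hb ((interior_subset (hcross_lt m j n' k' hj1 hj2 h1' h2' hgt)).trans hle')
          exact lt_of_le_of_lt hb' hjc
        · simp only [Set.mem_compl_iff, Set.mem_Ici]
          intro hja
          have := hmemS_le a _ ⟨m, j, hj1, hj2, rfl, hja⟩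
          linarith
      · exact ⟨Set.univ, fun b _ => lt_of_le_of_lt (hg1 b) hc, isOpen_univ, Set.mem_univ a⟩
    have htop := OrderTopology.topology_eq_generate_intervals (α := ℝ)
    have h2 : Continuous[_, TopologicalSpace.generateFrom
        {s : Set ℝ | ∃ a, s = Set.Ioi a ∨ s = Set.Iio a}] g := by
      refine continuous_generateFrom_iff.mpr ?_
      rintro s ⟨c, rfl | rfl⟩
      · exact hIoi c
      · exact hIio c
    rw [continuous_iff_coinduced_le] at h2 ⊢
    exact le_of_le_of_eq h2 htop.symm
  have hmem01 : ∀ a, g a ∈ unitInterval := fun a => ⟨hg0 a, hg1 a⟩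
  refine ⟨fun a => ⟨g a, hmem01 a⟩, hgcont.subtype_mk _, ?_, ?_⟩
  · intro a b
    rcases le_total (g a) (g b) with hab | hab
    · have hmin : min (⟨g a, hmem01 a⟩ : unitInterval) ⟨g b, hmem01 b⟩ = ⟨g a, hmem01 a⟩ :=
        min_eq_left (Subtype.mk_le_mk.mpr hab)
      rw [hmin]
      exact Subtype.ext (by simp only; rw [hginf a b, min_eq_left hab])
    · have hmin : min (⟨g a, hmem01 a⟩ : unitInterval) ⟨g b, hmem01 b⟩ = ⟨g b, hmem01 b⟩ :=
        min_eq_right (Subtype.mk_le_mk.mpr hab)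
      rw [hmin]
      exact Subtype.ext (by simp only; rw [hginf a b, min_eq_right hab])
  · intro hcon
    have hval : g x = g y := congrArg Subtype.val hcon
    rw [hgx, hgy] at hval
    norm_num at hval

/-- If `E` is a U-semilattice, then `E` is `𝕀`-separated: any two distinct points of
`E` are separated by a continuous semilattice homomorphism into the unit interval
`[0,1]` equipped with the operation `min`. -/
theorem exists_continuous_min_hom_to_unitInterval_separating_of_isUSemilattice
    (E : Type*) [SemilatticeInf E] [TopologicalSpace E] [T2Space E] [ContinuousInf E]
    (hU : IsUSemilattice E) :
    ∀ x y : E, x ≠ y →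
      ∃ h : E → unitInterval, Continuous h ∧
        (∀ a b : E, h (a ⊓ b) = min (h a) (h b)) ∧ h x ≠ h y := by
  intro x y hxy
  by_cases h1 : x ≤ y
  · have h2 : ¬ y ≤ x := fun h => hxy (le_antisymm h1 h)
    obtain ⟨h, hc, hm, hne⟩ := key_lemma hU y x h2
    exact ⟨h, hc, hm, fun e => hne e.symm⟩
  · exact key_lemma hU x y h1
end

section
/- If E is a 𝟐-embeddable U-semilattice, then E is a U_2-semilattice. -/
open Topology

/-- A topological semilattice is a *U₂-semilattice* if for every open set `U` and every
`x ∈ U` there are a point `y ∈ U` and a closed-and-open ideal `I` of `E` such that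
`x ∈ E \ I ⊆ ↑y`. -/
def IsU2Semilattice (E : Type*) [SemilatticeInf E] [TopologicalSpace E] : Prop :=
  ∀ U : Set E, IsOpen U → ∀ x ∈ U, ∃ y ∈ U, ∃ I : Set E,
    IsClosed I ∧ IsOpen I ∧ (∀ a : E, ∀ b ∈ I, a ⊓ b ∈ I) ∧ x ∈ Iᶜ ∧ Iᶜ ⊆ Set.Ici y

/-- The continuous semilattice homomorphisms from `E` to the two-element semilattice
`𝟐 = {0,1}` (modelled as `Bool` with the operation `min`). -/
def ContinuousMinHomToBool (E : Type*) [SemilatticeInf E] [TopologicalSpace E] :=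
  {h : E → Bool // Continuous h ∧ ∀ a b : E, h (a ⊓ b) = min (h a) (h b)}

/-- A topological semilattice `E` is *`𝟐`-embeddable* if the canonical map
`E → 𝟐^{Hom(E,𝟐)}`, `x ↦ (h(x))ₕ`, is a topological embedding. -/
def TwoEmbeddable (E : Type*) [SemilatticeInf E] [TopologicalSpace E] : Prop :=
  IsEmbedding (fun (x : E) (h : ContinuousMinHomToBool E) => h.1 x)

/-- If `E` is a `𝟐`-embeddable U-semilattice, then `E` is a U₂-semilattice. -/
theorem isU2Semilattice_of_twoEmbeddable_isUSemilattice
    (E : Type*) [SemilatticeInf E] [TopologicalSpace E] [T2Space E] [ContinuousInf E]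
    (h2 : TwoEmbeddable E) (hU : IsUSemilattice E) : IsU2Semilattice E := by
  intro U hUopen x hxU
  obtain ⟨y, hyU, hxint⟩ := hU U hUopen x hxU
  obtain ⟨S, hSopen, hS⟩ := h2.toIsInducing.isOpen_iff.mp (isOpen_interior (s := Set.Ici y))
  have hxS : (fun h : ContinuousMinHomToBool E => h.1 x) ∈ S := by
    rw [← hS] at hxint; exact hxint
  obtain ⟨F, u, hu, hsub⟩ := isOpen_pi_iff.mp hSopen _ hxS
  set W : Set E := {z | ∀ h ∈ F, h.1 x = true → h.1 z = true} with hW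
  have hcl : ∀ h : ContinuousMinHomToBool E,
      IsClosed {z : E | h.1 x = true → h.1 z = true} ∧
      IsOpen {z : E | h.1 x = true → h.1 z = true} := by
    intro h
    by_cases hx : h.1 x = true
    · have : {z : E | h.1 x = true → h.1 z = true} = h.1 ⁻¹' {true} := by
        ext z; simp [hx]
      rw [this]
      exact ⟨(isClosed_singleton).preimage h.2.1, (isOpen_discrete _).preimage h.2.1⟩
    · have : {z : E | h.1 x = true → h.1 z = true} = Set.univ := by
        ext z; simp [hx]
      rw [this]; exact ⟨isClosed_univ, isOpen_univ⟩
  have hWeq : W = ⋂ h ∈ F, {z : E | h.1 x = true → h.1 z = true} := by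
    ext z; simp [hW]
  have hWclosed : IsClosed W := by
    rw [hWeq]; exact isClosed_biInter fun h _ => (hcl h).1
  have hWopen : IsOpen W := by
    rw [hWeq]; exact F.finite_toSet.isOpen_biInter fun h _ => (hcl h).2
  -- main step: every z ∈ W satisfies y ≤ z
  have hWsub : W ⊆ Set.Ici y := by
    intro z hz
    have hmem : (fun h : ContinuousMinHomToBool E => h.1 (x ⊓ z)) ∈ (F : Set _).pi u := by
      intro h hh
      have hx : h.1 x ∈ u h := (hu h hh).2
      have hmin : h.1 (x ⊓ z) = h.1 x := by
        rw [h.2.2 x z]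
        cases hx' : h.1 x
        · cases h.1 z <;> rfl
        · rw [hz h hh hx']; decide
      show h.1 (x ⊓ z) ∈ u h
      rwa [hmin]
    have : x ⊓ z ∈ interior (Set.Ici y) := by
      rw [← hS]; exact hsub hmem
    have hyle : y ≤ x ⊓ z := interior_subset this
    exact le_trans hyle inf_le_right
  refine ⟨y, hyU, Wᶜ, hWopen.isClosed_compl, hWclosed.isOpen_compl, ?_, ?_, ?_⟩
  · intro a b hb
    simp only [Set.mem_compl_iff, hW, Set.mem_setOf_eq, not_forall] at hb ⊢
    obtain ⟨h, hhF, hhx, hhb⟩ := hb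
    refine ⟨h, hhF, hhx, ?_⟩
    have hbf : h.1 b = false := by
      cases hb : h.1 b
      · rfl
      · exact absurd hb hhb
    rw [h.2.2 a b, hbf]
    cases h.1 a <;> simp
  · rw [compl_compl]
    intro h hh hhx; exact hhx
  · rw [compl_compl]; exact hWsub
end

section
/- A topological semilattice E is a U-semilattice if and only if for every open upper set U ⊆ E (i.e., U = ↑U) and every point x ∈ U there is a point y ∈ U with y ≪ x. -/
/-- A topological semilattice `E` is a U-semilattice if and only if for every open
*upper* set `U ⊆ E` and every point `x ∈ U` there is a point `y ∈ U` with `y ≪ x`. -/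
theorem isUSemilattice_iff_forall_open_upperSet
    (E : Type*) [SemilatticeInf E] [TopologicalSpace E] [T2Space E] [ContinuousInf E] :
    IsUSemilattice E ↔
      ∀ U : Set E, IsOpen U → IsUpperSet U → ∀ x ∈ U,
        ∃ y ∈ U, x ∈ interior (Set.Ici y) := by
  constructor
  · intro h U hU _ x hx
    exact h U hU x hx
  · intro h U hU x hx
    -- use continuity of ⊓ at (x, x) to get an open O ∋ x with O ⊓ O ⊆ U
    have hcont : Continuous fun p : E × E => p.1 ⊓ p.2 := continuous_inf
    have hopen : IsOpen {p : E × E | p.1 ⊓ p.2 ∈ U} := hU.preimage hcont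
    have hxx : (x, x) ∈ {p : E × E | p.1 ⊓ p.2 ∈ U} := by
      simp [Set.mem_setOf_eq]
      exact hx
    obtain ⟨u, v, hu, hv, hxu, hxv, huv⟩ := isOpen_prod_iff.mp hopen x x hxx
    set O : Set E := u ∩ v with hO
    have hOopen : IsOpen O := hu.inter hv
    have hxO : x ∈ O := ⟨hxu, hxv⟩
    have hOO : ∀ a ∈ O, ∀ b ∈ O, a ⊓ b ∈ U := by
      intro a ha b hb
      exact huv (Set.mk_mem_prod ha.1 hb.2)
    have hOsub : O ⊆ U := fun a ha => by simpa using hOO a ha a ha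
    -- W : open upper set
    set W : Set E := ⋃ a ∈ O, {z | z ⊓ a ∈ O} with hW
    have hWopen : IsOpen W := by
      refine isOpen_biUnion fun a _ => ?_
      exact hOopen.preimage (continuous_id.inf continuous_const)
    have hWupper : IsUpperSet W := by
      intro z z' hzz' hz
      obtain ⟨a, ha, hza⟩ := Set.mem_iUnion₂.mp hz
      refine Set.mem_iUnion₂.mpr ⟨z ⊓ a, hza, ?_⟩
      have : z' ⊓ (z ⊓ a) = z ⊓ a := by
        rw [inf_eq_right]
        exact le_trans inf_le_left hzz'
      simpa [Set.mem_setOf_eq, this] using hza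
    have hxW : x ∈ W := Set.mem_iUnion₂.mpr ⟨x, hxO, by simpa using hxO⟩
    obtain ⟨y', hy'W, hxint⟩ := h W hWopen hWupper x hxW
    obtain ⟨a, ha, hy'a⟩ := Set.mem_iUnion₂.mp hy'W
    refine ⟨y' ⊓ a, hOsub hy'a, ?_⟩
    have hsub : Set.Ici y' ⊆ Set.Ici (y' ⊓ a) := Set.Ici_subset_Ici.mpr inf_le_left
    exact interior_mono hsub hxint
end

section
/- Every U_0-semilattice is a U_2-semilattice. -/
/-- Every U₀-semilattice is a U₂-semilattice. -/
theorem isU2Semilattice_of_isU0Semilattice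
    (E : Type*) [SemilatticeInf E] [TopologicalSpace E] [T2Space E] [ContinuousInf E]
    (h0 : IsU0Semilattice E) : IsU2Semilattice E := by
  intro U hU x hx
  obtain ⟨y, hyU, hopen, hyx⟩ := h0 U hU x hx
  have hclosed : IsClosed (Set.Ici y) := by
    have : Set.Ici y = {z : E | y ⊓ z = y} := by
      ext z
      simp only [Set.mem_Ici, Set.mem_setOf_eq]
      exact ⟨fun h => inf_eq_left.mpr h, fun h => inf_eq_left.mp h⟩
    rw [this]
    exact isClosed_eq (continuous_const.inf continuous_id) continuous_const
  refine ⟨y, hyU, (Set.Ici y)ᶜ, hopen.isClosed_compl, hclosed.isOpen_compl, ?_, ?_, ?_⟩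
  · intro a b hb hab
    exact hb (le_trans hab inf_le_right)
  · simpa using hyx
  · simp
end

section
/- Every second countable precompact topological Clifford semigroup S is metrizable by a subinvariant metric, i.e., there is a metric d generating the topology of S such that max{d(zx,zy), d(xz,yz)} ≤ d(x,y) = d(x⁻¹,y⁻¹) for all x, y, z ∈ S. -/
open Topology

/-- `d` is a metric on `X` generating its topology. -/
def IsCompatibleMetric {X : Type u} [TopologicalSpace X] (d : X → X → ℝ) : Prop :=
  (∀ x y : X, d x y = 0 ↔ x = y) ∧ (∀ x y : X, d x y = d y x) ∧
  (∀ x y z : X, d x z ≤ d x y + d y z) ∧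
  (∀ s : Set X, IsOpen s ↔ ∀ x ∈ s, ∃ ε > 0, {y : X | d x y < ε} ⊆ s)

section AuxAlg
variable {S : Type u} [Semigroup S] [Inv S]

private lemma aux_inv_inv
    (hinv : ∀ x : S, x * x⁻¹ * x = x ∧ x⁻¹ * x * x⁻¹ = x⁻¹)
    (huniq : ∀ x y : S, x * y * x = x → y * x * y = y → y = x⁻¹)
    (x : S) : x⁻¹⁻¹ = x :=
  (huniq x⁻¹ x (hinv x).2 (hinv x).1).symm

private lemma aux_idem_inv
    (huniq : ∀ x y : S, x * y * x = x → y * x * y = y → y = x⁻¹)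
    (e : S) (he : e * e = e) : e⁻¹ = e :=
  (huniq e e (by rw [he, he]) (by rw [he, he])).symm

private lemma aux_idem_mul_idem
    (hinv : ∀ x : S, x * x⁻¹ * x = x ∧ x⁻¹ * x * x⁻¹ = x⁻¹)
    (huniq : ∀ x y : S, x * y * x = x → y * x * y = y → y = x⁻¹)
    (e f : S) (he : e * e = e) (hf : f * f = f) : (e * f) * (e * f) = e * f := by
  set a := (e * f)⁻¹ with ha
  have h1 : (e * f) * a * (e * f) = e * f := (hinv (e * f)).1
  have h2 : a * (e * f) * a = a := (hinv (e * f)).2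
  have hee : ∀ x : S, e * (e * x) = e * x := fun x => by rw [← mul_assoc, he]
  have hff : ∀ x : S, f * (f * x) = f * x := fun x => by rw [← mul_assoc, hf]
  have h2z : ∀ z : S, a * (e * (f * (a * z))) = a * z := fun z => by
    have := congrArg (· * z) h2
    simpa [mul_assoc] using this
  have hA : f * a * e = a := by
    apply huniq (e * f) (f * a * e)
    · have : e * (f * (f * (a * (e * (e * f))))) = e * f := by
        rw [hff, hee]
        simpa [mul_assoc] using h1
      simpa [mul_assoc] using this
    · have : f * (a * (e * (e * (f * (f * (a * e)))))) = f * (a * e) := by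
        rw [hee, hff, h2z]
      simpa [mul_assoc] using this
  have haa : a * a = a := by
    have key : (f * a * e) * (f * a * e) = f * a * e := by
      calc (f * a * e) * (f * a * e) = f * (a * (e * (f * (a * e)))) := by
            simp [mul_assoc]
        _ = f * (a * e) := by rw [h2z e]
        _ = f * a * e := by rw [mul_assoc]
    rw [← hA]; exact key
  have hinv_a : a⁻¹ = a := aux_idem_inv huniq a haa
  have hef : e * f = a := by
    have h := aux_inv_inv hinv huniq (e * f)
    rw [← h, ← ha, hinv_a]
  rw [hef]; exact haa

private lemma aux_idem_comm
    (hinv : ∀ x : S, x * x⁻¹ * x = x ∧ x⁻¹ * x * x⁻¹ = x⁻¹)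
    (huniq : ∀ x y : S, x * y * x = x → y * x * y = y → y = x⁻¹)
    (e f : S) (he : e * e = e) (hf : f * f = f) : e * f = f * e := by
  have hef : (e * f) * (e * f) = e * f := aux_idem_mul_idem hinv huniq e f he hf
  have hfe : (f * e) * (f * e) = f * e := aux_idem_mul_idem hinv huniq f e hf he
  have hee : ∀ x : S, e * (e * x) = e * x := fun x => by rw [← mul_assoc, he]
  have hff : ∀ x : S, f * (f * x) = f * x := fun x => by rw [← mul_assoc, hf]
  have key : f * e = (e * f)⁻¹ := by
    apply huniq (e * f) (f * e)
    · have : e * (f * (f * (e * (e * f)))) = e * f := by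
        rw [hff, hee]
        simpa [mul_assoc] using hef
      simpa [mul_assoc] using this
    · have : f * (e * (e * (f * (f * e)))) = f * e := by
        rw [hee, hff]
        simpa [mul_assoc] using hfe
      simpa [mul_assoc] using this
  rw [key, aux_idem_inv huniq (e*f) hef]

private lemma aux_mul_inv_rev
    (hinv : ∀ x : S, x * x⁻¹ * x = x ∧ x⁻¹ * x * x⁻¹ = x⁻¹)
    (huniq : ∀ x y : S, x * y * x = x → y * x * y = y → y = x⁻¹)
    (a b : S) : (a * b)⁻¹ = b⁻¹ * a⁻¹ := by
  have hea : (a⁻¹ * a) * (a⁻¹ * a) = a⁻¹ * a := by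
    have := congrArg (a⁻¹ * ·) (hinv a).1
    simpa [mul_assoc] using this
  have heb : (b * b⁻¹) * (b * b⁻¹) = b * b⁻¹ := by
    have := congrArg (· * b⁻¹) (hinv b).1
    simpa [mul_assoc] using this
  have hcomm : (b * b⁻¹) * (a⁻¹ * a) = (a⁻¹ * a) * (b * b⁻¹) :=
    aux_idem_comm hinv huniq _ _ heb hea
  have hc : ∀ z : S, b * (b⁻¹ * (a⁻¹ * (a * z))) = a⁻¹ * (a * (b * (b⁻¹ * z))) := fun z => by
    have := congrArg (· * z) hcomm
    simpa [mul_assoc] using this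
  symm
  apply huniq (a * b) (b⁻¹ * a⁻¹)
  · have h1 : a * (b * (b⁻¹ * (a⁻¹ * (a * b)))) = a * b := by
      rw [hc]
      have hbt : b * (b⁻¹ * b) = b := by simpa [mul_assoc] using (hinv b).1
      have hat : ∀ z : S, a * (a⁻¹ * (a * z)) = a * z := fun z => by
        have := congrArg (· * z) (hinv a).1
        simpa [mul_assoc] using this
      rw [hbt, hat]
    simpa [mul_assoc] using h1
  · have h2 : b⁻¹ * (a⁻¹ * (a * (b * (b⁻¹ * a⁻¹)))) = b⁻¹ * a⁻¹ := by
      rw [← hc]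
      have hbt : ∀ z : S, b⁻¹ * (b * (b⁻¹ * z)) = b⁻¹ * z := fun z => by
        have := congrArg (· * z) (hinv b).2
        simpa [mul_assoc] using this
      have hat : a⁻¹ * (a * a⁻¹) = a⁻¹ := by simpa [mul_assoc] using (hinv a).2
      rw [hbt, hat]
    simpa [mul_assoc] using h2

end AuxAlg

/-- Every second countable precompact topological Clifford semigroup is metrizable by
a subinvariant metric: a metric `d` generating its topology such that
`max {d(zx,zy), d(xz,yz)} ≤ d(x,y) = d(x⁻¹,y⁻¹)` for all `x, y, z`. -/
theorem exists_subinvariant_metric_of_secondCountable_precompact_clifford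
    (S : Type u) [Semigroup S] [TopologicalSpace S] [Inv S]
    [SecondCountableTopology S] (hS : IsTopologicalCliffordSemigroup S)
    (hpre : IsPrecompactSemigroup S) :
    ∃ d : S → S → ℝ, IsCompatibleMetric d ∧
      (∀ x y z : S, max (d (z * x) (z * y)) (d (x * z) (y * z)) ≤ d x y) ∧
      (∀ x y : S, d x y = d x⁻¹ y⁻¹) := by
  classical
  obtain ⟨hT2, hMulS, hInvS, hclifford, huniq⟩ := hS
  have hinv : ∀ x : S, x * x⁻¹ * x = x ∧ x⁻¹ * x * x⁻¹ = x⁻¹ :=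
    fun x => ⟨(hclifford x).1, (hclifford x).2.1⟩
  obtain ⟨K, _, _, hKT2, hKcomp, hKmul, f, hf_mul, hf_emb⟩ := hpre
  haveI := hT2; haveI := hKT2; haveI := hKcomp; haveI := hKmul
  -- countable basis enumeration
  obtain ⟨ℬ, hBc, -, hbasis⟩ := TopologicalSpace.exists_countable_basis S
  obtain ⟨Bseq, hBseq⟩ := (hBc.insert ∅).exists_eq_range ⟨∅, Set.mem_insert _ _⟩
  have hBmem : ∀ b ∈ ℬ, ∃ i, Bseq i = b := by
    intro b hb
    have : b ∈ insert ∅ ℬ := Set.mem_insert_of_mem _ hb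
    rw [hBseq] at this
    obtain ⟨i, hi⟩ := this
    exact ⟨i, hi⟩
  -- the countable family of [0,1]-valued continuous functions on K
  set R : ℕ → Prop := fun n => ∃ g : K → ℝ, Continuous g ∧ (∀ t, g t ∈ Set.Icc (0:ℝ) 1) ∧
    (∀ x' ∈ Bseq n.unpair.1, 3/4 < g (f x')) ∧ {y : S | 1/2 < g (f y)} ⊆ Bseq n.unpair.2
    with hR
  set g : ℕ → K → ℝ := fun n => if h : R n then h.choose else fun _ => 0 with hg
  have hgcont : ∀ n, Continuous (g n) := by
    intro n; rw [hg]; dsimp only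
    split
    · next h => exact h.choose_spec.1
    · exact continuous_const
  have hgmem : ∀ n t, g n t ∈ Set.Icc (0:ℝ) 1 := by
    intro n t; rw [hg]; dsimp only
    split
    · next h => exact h.choose_spec.2.1 t
    · simp
  have hgR : ∀ n, R n → (∀ x' ∈ Bseq n.unpair.1, 3/4 < g n (f x')) ∧
      {y : S | 1/2 < g n (f y)} ⊆ Bseq n.unpair.2 := by
    intro n hn; rw [hg]; dsimp only
    rw [dif_pos hn]
    exact ⟨hn.choose_spec.2.2.1, hn.choose_spec.2.2.2⟩
  -- the pseudometric on K
  set ρ : K → K → ℝ := fun p q => ∑' n : ℕ, (1/2:ℝ)^n * |g n p - g n q| with hρ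
  have habs_le : ∀ n p q, |g n p - g n q| ≤ 1 := by
    intro n p q
    have h1 := hgmem n p; have h2 := hgmem n q
    rw [Set.mem_Icc] at h1 h2
    rw [abs_sub_le_iff]; constructor <;> linarith
  have hterm_nonneg : ∀ n p q, 0 ≤ (1/2:ℝ)^n * |g n p - g n q| :=
    fun n p q => mul_nonneg (by positivity) (abs_nonneg _)
  have hsummable : ∀ p q, Summable (fun n => (1/2:ℝ)^n * |g n p - g n q|) := by
    intro p q
    apply Summable.of_nonneg_of_le (hterm_nonneg · p q) _ summable_geometric_two
    intro n
    calc (1/2:ℝ)^n * |g n p - g n q| ≤ (1/2:ℝ)^n * 1 :=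
          mul_le_mul_of_nonneg_left (habs_le n p q) (by positivity)
      _ = (1/2:ℝ)^n := mul_one _
  have hρ_nonneg : ∀ p q, 0 ≤ ρ p q := fun p q => tsum_nonneg (hterm_nonneg · p q)
  have hρ_symm : ∀ p q, ρ p q = ρ q p := by
    intro p q; rw [hρ]; dsimp only
    congr 1; funext n; rw [abs_sub_comm]
  have hρ_self : ∀ p, ρ p p = 0 := by
    intro p; rw [hρ]; dsimp only
    simp
  have hρ_le_two : ∀ p q, ρ p q ≤ 2 := by
    intro p q
    calc ρ p q ≤ ∑' n : ℕ, (1/2:ℝ)^n := by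
          apply Summable.tsum_le_tsum _ (hsummable p q) summable_geometric_two
          intro n
          calc (1/2:ℝ)^n * |g n p - g n q| ≤ (1/2:ℝ)^n * 1 :=
                mul_le_mul_of_nonneg_left (habs_le n p q) (by positivity)
            _ = (1/2:ℝ)^n := mul_one _
      _ = 2 := tsum_geometric_two
  have hterm_le : ∀ n p q, (1/2:ℝ)^n * |g n p - g n q| ≤ ρ p q := by
    intro n p q
    exact Summable.le_tsum (hsummable p q) n (fun j _ => hterm_nonneg j p q)
  have hρ_tri : ∀ p q r, ρ p r ≤ ρ p q + ρ q r := by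
    intro p q r
    rw [hρ]; dsimp only
    rw [← Summable.tsum_add (hsummable p q) (hsummable q r)]
    apply Summable.tsum_le_tsum _ (hsummable p r)
      ((hsummable p q).add (hsummable q r))
    intro n
    have := abs_sub_le (g n p) (g n q) (g n r)
    nlinarith [pow_nonneg (by norm_num : (0:ℝ) ≤ 1/2) n]
  have hρ_cont : Continuous (fun z : K × K => ρ z.1 z.2) := by
    rw [hρ]; dsimp only
    apply continuous_tsum (u := fun n => (1/2:ℝ)^n)
    · intro n
      exact continuous_const.mul
        ((hgcont n).comp continuous_fst |>.sub ((hgcont n).comp continuous_snd)).abs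
    · exact summable_geometric_two
    · intro n z
      rw [Real.norm_eq_abs, abs_of_nonneg (hterm_nonneg n z.1 z.2)]
      calc (1/2:ℝ)^n * |g n z.1 - g n z.2| ≤ (1/2:ℝ)^n * 1 :=
            mul_le_mul_of_nonneg_left (habs_le n z.1 z.2) (by positivity)
        _ = (1/2:ℝ)^n := mul_one _
  -- generation of the topology of S
  have hGEN : ∀ (x : S) (s : Set S), IsOpen s → x ∈ s →
      ∃ n : ℕ, 3/4 < g n (f x) ∧ {y : S | 1/2 < g n (f y)} ⊆ s := by
    intro x s hs hxs
    obtain ⟨b, hbB, hxb, hbs⟩ := hbasis.exists_subset_of_mem_open hxs hs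
    obtain ⟨j, hj⟩ := hBmem b hbB
    have hbopen : IsOpen b := hbasis.isOpen hbB
    obtain ⟨O', hO', hbO'⟩ := hf_emb.isOpen_iff.1 hbopen
    have hfxO' : f x ∈ O' := by rw [← hbO'] at hxb; exact hxb
    obtain ⟨gc, hgc0, hgc1, hgcI⟩ :=
      exists_continuous_zero_one_of_isClosed (X := K) hO'.isClosed_compl
        (isClosed_singleton (x := f x))
        (by simp [Set.disjoint_singleton_right, hfxO'])
    set W : Set S := {y : S | 3/4 < gc (f y)} with hW
    have hWopen : IsOpen W := by
      have : Continuous fun y : S => gc (f y) := gc.continuous.comp hf_emb.continuous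
      exact isOpen_lt continuous_const this
    have hxW : x ∈ W := by
      have : gc (f x) = 1 := hgc1 rfl
      simp only [hW, Set.mem_setOf_eq, this]
      norm_num
    obtain ⟨b2, hb2B, hxb2, hb2W⟩ := hbasis.exists_subset_of_mem_open hxW hWopen
    obtain ⟨i, hi⟩ := hBmem b2 hb2B
    refine ⟨Nat.pair i j, ?_, ?_⟩
    all_goals {
      have hRn : R (Nat.pair i j) := by
        rw [hR]; dsimp only
        refine ⟨gc, gc.continuous, hgcI, ?_, ?_⟩
        · rw [Nat.unpair_pair]; dsimp only
          rw [hi]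
          intro x' hx'
          exact hb2W hx'
        · rw [Nat.unpair_pair]; dsimp only
          rw [hj]
          intro y hy
          simp only [Set.mem_setOf_eq] at hy
          have hfy : f y ∈ O' := by
            by_contra hcon
            have : gc (f y) = 0 := hgc0 hcon
            rw [this] at hy; norm_num at hy
          rw [← hbO']; exact hfy
      have := hgR _ hRn
      rw [Nat.unpair_pair] at this
      first
      | · exact this.1 x (by rw [hi]; exact hxb2)
      | · intro y hy
          have := this.2 hy
          rw [hj] at this
          exact hbs this }
  -- equicontinuity of translations, via compactness of K
  have hOmega : ∀ ε : ℝ, 0 < ε → ∃ Ω : Set (K × K), IsOpen Ω ∧ (∀ k : K, (k, k) ∈ Ω) ∧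
      ∀ p q : K, (p, q) ∈ Ω → ρ p q < ε ∧ (∀ a : K, ρ (a*p) (a*q) < ε) ∧
        (∀ b : K, ρ (p*b) (q*b) < ε) ∧ (∀ a b : K, ρ (a*p*b) (a*q*b) < ε) := by
    intro ε hε
    set V : Set (K × K) := {z | ρ z.1 z.2 < ε} with hV
    have hVopen : IsOpen V := isOpen_lt hρ_cont continuous_const
    have hVdiag : ∀ k : K, (k, k) ∈ V := fun k => by
      simp only [hV, Set.mem_setOf_eq, hρ_self]; exact hε
    set C : Set ((K × K) × (K × K)) := {w | (w.2.1, w.2.2) ∈ V ∧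
      (w.1.1*w.2.1, w.1.1*w.2.2) ∈ V ∧ (w.2.1*w.1.2, w.2.2*w.1.2) ∈ V ∧
      (w.1.1*w.2.1*w.1.2, w.1.1*w.2.2*w.1.2) ∈ V} with hC
    have hCopen : IsOpen C := by
      apply IsOpen.inter
      · exact hVopen.preimage (by fun_prop)
      apply IsOpen.inter
      · exact hVopen.preimage (by fun_prop)
      apply IsOpen.inter
      · exact hVopen.preimage (by fun_prop)
      · exact hVopen.preimage (by fun_prop)
    set Ω : Set (K × K) := (Prod.snd '' Cᶜ)ᶜ with hΩ
    have hΩopen : IsOpen Ω :=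
      (isClosedMap_snd_of_compactSpace _ hCopen.isClosed_compl).isOpen_compl
    refine ⟨Ω, hΩopen, ?_, ?_⟩
    · intro k
      rw [hΩ]
      intro hmem
      obtain ⟨w, hwC, hw2⟩ := hmem
      apply hwC
      rw [hC]
      refine ⟨?_, ?_, ?_, ?_⟩ <;> rw [hw2] <;> exact hVdiag _
    · intro p q hpq
      have hall : ∀ a b : K, ((a, b), (p, q)) ∈ C := by
        intro a b
        by_contra hcon
        exact hpq ⟨((a, b), (p, q)), hcon, rfl⟩
      exact ⟨(hall p p).1, fun a => (hall a p).2.1, fun b => (hall p b).2.2.1,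
        fun a b => (hall a b).2.2.2⟩
  -- the subinvariant sup-metric
  set A : S → S → Set ℝ := fun x y =>
    {r | r = ρ (f x) (f y) ∨ (∃ a : S, r = ρ (f (a*x)) (f (a*y))) ∨
         (∃ b : S, r = ρ (f (x*b)) (f (y*b))) ∨
         (∃ a b : S, r = ρ (f (a*x*b)) (f (a*y*b)))} with hA
  have hA_bdd : ∀ x y, BddAbove (A x y) := by
    intro x y
    refine ⟨2, ?_⟩
    rintro r (rfl|⟨a,rfl⟩|⟨b,rfl⟩|⟨a,b,rfl⟩) <;> exact hρ_le_two _ _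
  have hA_base : ∀ x y, ρ (f x) (f y) ∈ A x y := fun x y => Or.inl rfl
  set σ : S → S → ℝ := fun x y => sSup (A x y) with hσ
  have hρ_le_σ : ∀ x y, ρ (f x) (f y) ≤ σ x y :=
    fun x y => le_csSup (hA_bdd x y) (hA_base x y)
  have hσ_nonneg : ∀ x y, 0 ≤ σ x y :=
    fun x y => le_trans (hρ_nonneg _ _) (hρ_le_σ x y)
  have hσ_symm : ∀ x y, σ x y = σ y x := by
    intro x y
    have : A x y = A y x := by
      ext r
      constructor <;>
        (rintro (rfl|⟨a,rfl⟩|⟨b,rfl⟩|⟨a,b,rfl⟩)) <;>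
        first
        | exact Or.inl (hρ_symm _ _)
        | exact Or.inr (Or.inl ⟨a, hρ_symm _ _⟩)
        | exact Or.inr (Or.inr (Or.inl ⟨b, hρ_symm _ _⟩))
        | exact Or.inr (Or.inr (Or.inr ⟨a, b, hρ_symm _ _⟩))
    rw [hσ]; dsimp only; rw [this]
  have hσ_tri : ∀ x y z : S, σ x z ≤ σ x y + σ y z := by
    intro x y z
    apply Real.sSup_le _ (add_nonneg (hσ_nonneg x y) (hσ_nonneg y z))
    rintro r (rfl|⟨a,rfl⟩|⟨b,rfl⟩|⟨a,b,rfl⟩)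
    · exact le_trans (hρ_tri _ (f y) _)
        (add_le_add (hρ_le_σ x y) (hρ_le_σ y z))
    · exact le_trans (hρ_tri _ (f (a*y)) _)
        (add_le_add (le_csSup (hA_bdd x y) (Or.inr (Or.inl ⟨a, rfl⟩)))
          (le_csSup (hA_bdd y z) (Or.inr (Or.inl ⟨a, rfl⟩))))
    · exact le_trans (hρ_tri _ (f (y*b)) _)
        (add_le_add (le_csSup (hA_bdd x y) (Or.inr (Or.inr (Or.inl ⟨b, rfl⟩))))
          (le_csSup (hA_bdd y z) (Or.inr (Or.inr (Or.inl ⟨b, rfl⟩)))))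
    · exact le_trans (hρ_tri _ (f (a*y*b)) _)
        (add_le_add (le_csSup (hA_bdd x y) (Or.inr (Or.inr (Or.inr ⟨a, b, rfl⟩))))
          (le_csSup (hA_bdd y z) (Or.inr (Or.inr (Or.inr ⟨a, b, rfl⟩)))))
  have hσ_self : ∀ x : S, σ x x = 0 := by
    intro x
    have : A x x = {0} := by
      ext r
      constructor
      · rintro (rfl|⟨a,rfl⟩|⟨b,rfl⟩|⟨a,b,rfl⟩) <;> simp [hρ_self]
      · rintro rfl
        exact Or.inl (hρ_self _).symm
    rw [hσ]; dsimp only; rw [this, csSup_singleton]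
  -- subinvariance of σ
  have hL : ∀ x y z : S, σ (z*x) (z*y) ≤ σ x y := by
    intro x y z
    apply Real.sSup_le _ (hσ_nonneg x y)
    rintro r (rfl|⟨a,rfl⟩|⟨b,rfl⟩|⟨a,b,rfl⟩)
    · exact le_csSup (hA_bdd x y) (Or.inr (Or.inl ⟨z, rfl⟩))
    · rw [show a*(z*x) = (a*z)*x from (mul_assoc a z x).symm,
        show a*(z*y) = (a*z)*y from (mul_assoc a z y).symm]
      exact le_csSup (hA_bdd x y) (Or.inr (Or.inl ⟨a*z, rfl⟩))
    · exact le_csSup (hA_bdd x y) (Or.inr (Or.inr (Or.inr ⟨z, b, rfl⟩)))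
    · rw [show a*(z*x)*b = (a*z)*x*b by rw [← mul_assoc],
        show a*(z*y)*b = (a*z)*y*b by rw [← mul_assoc]]
      exact le_csSup (hA_bdd x y) (Or.inr (Or.inr (Or.inr ⟨a*z, b, rfl⟩)))
  have hRmul : ∀ x y z : S, σ (x*z) (y*z) ≤ σ x y := by
    intro x y z
    apply Real.sSup_le _ (hσ_nonneg x y)
    rintro r (rfl|⟨a,rfl⟩|⟨b,rfl⟩|⟨a,b,rfl⟩)
    · exact le_csSup (hA_bdd x y) (Or.inr (Or.inr (Or.inl ⟨z, rfl⟩)))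
    · rw [show a*(x*z) = a*x*z from (mul_assoc a x z).symm,
        show a*(y*z) = a*y*z from (mul_assoc a y z).symm]
      exact le_csSup (hA_bdd x y) (Or.inr (Or.inr (Or.inr ⟨a, z, rfl⟩)))
    · rw [show (x*z)*b = x*(z*b) from mul_assoc x z b,
        show (y*z)*b = y*(z*b) from mul_assoc y z b]
      exact le_csSup (hA_bdd x y) (Or.inr (Or.inr (Or.inl ⟨z*b, rfl⟩)))
    · rw [show a*(x*z)*b = a*x*(z*b) by rw [← mul_assoc, mul_assoc],
        show a*(y*z)*b = a*y*(z*b) by rw [← mul_assoc, mul_assoc]]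
      exact le_csSup (hA_bdd x y) (Or.inr (Or.inr (Or.inr ⟨a, z*b, rfl⟩)))
  -- the metric
  set d : S → S → ℝ := fun x y => max (σ x y) (σ x⁻¹ y⁻¹) with hd
  have hσ_le_d : ∀ x y, σ x y ≤ d x y := fun x y => le_max_left _ _
  -- equicontinuity: small neighborhoods in the d-pseudometric
  have hnbhd : ∀ (x : S) (ε : ℝ), 0 < ε → ∃ N : Set S, IsOpen N ∧ x ∈ N ∧
      ∀ y ∈ N, d x y ≤ ε := by
    intro x ε hε
    obtain ⟨Ω, hΩo, hΩd, hΩp⟩ := hOmega ε hε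
    set N : Set S := {y : S | (f x, f y) ∈ Ω ∧ (f x⁻¹, f y⁻¹) ∈ Ω} with hN
    have hNopen : IsOpen N := by
      have h1 : Continuous fun y : S => (f x, f y) :=
        continuous_const.prodMk hf_emb.continuous
      have h2 : Continuous fun y : S => (f x⁻¹, f y⁻¹) :=
        continuous_const.prodMk (hf_emb.continuous.comp hInvS)
      exact (hΩo.preimage h1).inter (hΩo.preimage h2)
    have hxN : x ∈ N := ⟨hΩd _, hΩd _⟩
    refine ⟨N, hNopen, hxN, ?_⟩
    rintro y ⟨hy1, hy2⟩
    have hbound : ∀ (u v : S), (f u, f v) ∈ Ω → σ u v ≤ ε := by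
      intro u v huv
      apply Real.sSup_le _ hε.le
      rintro r (rfl|⟨a,rfl⟩|⟨b,rfl⟩|⟨a,b,rfl⟩)
      · exact ((hΩp _ _ huv).1).le
      · rw [hf_mul a u, hf_mul a v]
        exact ((hΩp _ _ huv).2.1 (f a)).le
      · rw [hf_mul u b, hf_mul v b]
        exact ((hΩp _ _ huv).2.2.1 (f b)).le
      · rw [hf_mul (a*u) b, hf_mul a u, hf_mul (a*v) b, hf_mul a v]
        exact ((hΩp _ _ huv).2.2.2 (f a) (f b)).le
    exact max_le (hbound x y hy1) (hbound x⁻¹ y⁻¹ hy2)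
  refine ⟨d, ⟨?_, ?_, ?_, ?_⟩, ?_, ?_⟩
  · -- d x y = 0 ↔ x = y
    intro x y
    constructor
    · intro h
      by_contra hne
      have hρ0 : ρ (f x) (f y) = 0 := by
        have h1 : ρ (f x) (f y) ≤ 0 := by
          calc ρ (f x) (f y) ≤ σ x y := hρ_le_σ x y
            _ ≤ d x y := hσ_le_d x y
            _ = 0 := h
        exact le_antisymm h1 (hρ_nonneg _ _)
      have hterm0 : ∀ n, g n (f x) = g n (f y) := by
        intro n
        have h1 : (1/2:ℝ)^n * |g n (f x) - g n (f y)| ≤ 0 := by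
          rw [← hρ0]; exact hterm_le n _ _
        have h2 : (1/2:ℝ)^n * |g n (f x) - g n (f y)| = 0 :=
          le_antisymm h1 (hterm_nonneg n _ _)
        have h3 : |g n (f x) - g n (f y)| = 0 := by
          have hpow : (0:ℝ) < (1/2:ℝ)^n := by positivity
          rcases mul_eq_zero.1 h2 with h | h
          · exact absurd h hpow.ne'
          · exact h
        have := abs_eq_zero.1 h3
        linarith
      obtain ⟨n, hn1, hn2⟩ := hGEN x {y}ᶜ isClosed_singleton.isOpen_compl
        (by simp [hne])
      have : y ∈ ({y}ᶜ : Set S) := hn2 (by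
        simp only [Set.mem_setOf_eq, ← hterm0 n]
        linarith)
      simp at this
    · rintro rfl
      rw [hd]; dsimp only
      rw [hσ_self, hσ_self]
      simp
  · -- symmetry
    intro x y
    rw [hd]; dsimp only
    rw [hσ_symm x y, hσ_symm x⁻¹ y⁻¹]
  · -- triangle
    intro x y z
    rw [hd]; dsimp only
    exact max_le
      (le_trans (hσ_tri x y z) (add_le_add (le_max_left _ _) (le_max_left _ _)))
      (le_trans (hσ_tri x⁻¹ y⁻¹ z⁻¹) (add_le_add (le_max_right _ _) (le_max_right _ _)))
  · -- topology
    intro s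
    constructor
    · intro hs x hxs
      obtain ⟨n, hn1, hn2⟩ := hGEN x s hs hxs
      refine ⟨(1/2:ℝ)^n * (1/4), by positivity, ?_⟩
      intro y hy
      simp only [Set.mem_setOf_eq] at hy
      apply hn2
      have h1 : (1/2:ℝ)^n * |g n (f x) - g n (f y)| < (1/2:ℝ)^n * (1/4) := by
        calc (1/2:ℝ)^n * |g n (f x) - g n (f y)| ≤ ρ (f x) (f y) := hterm_le n _ _
          _ ≤ σ x y := hρ_le_σ x y
          _ ≤ d x y := hσ_le_d x y
          _ < (1/2:ℝ)^n * (1/4) := hy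
      have h2 : |g n (f x) - g n (f y)| < 1/4 := by
        have hpow : (0:ℝ) < (1/2:ℝ)^n := by positivity
        exact lt_of_mul_lt_mul_left h1 hpow.le
      have h3 := abs_lt.1 h2
      simp only [Set.mem_setOf_eq]
      linarith [h3.1, h3.2]
    · intro h
      rw [isOpen_iff_mem_nhds]
      intro x hxs
      obtain ⟨ε, hε, hball⟩ := h x hxs
      obtain ⟨N, hNo, hxN, hNb⟩ := hnbhd x (ε/2) (half_pos hε)
      apply Filter.mem_of_superset (hNo.mem_nhds hxN)
      intro y hy
      apply hball
      simp only [Set.mem_setOf_eq]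
      exact lt_of_le_of_lt (hNb y hy) (half_lt_self hε)
  · -- subinvariance
    intro x y z
    apply max_le
    · have e1 : (z*x)⁻¹ = x⁻¹ * z⁻¹ := aux_mul_inv_rev hinv huniq z x
      have e2 : (z*y)⁻¹ = y⁻¹ * z⁻¹ := aux_mul_inv_rev hinv huniq z y
      rw [hd]; dsimp only
      rw [e1, e2]
      exact max_le ((hL x y z).trans (le_max_left _ _))
        ((hRmul x⁻¹ y⁻¹ z⁻¹).trans (le_max_right _ _))
    · have e1 : (x*z)⁻¹ = z⁻¹ * x⁻¹ := aux_mul_inv_rev hinv huniq x z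
      have e2 : (y*z)⁻¹ = z⁻¹ * y⁻¹ := aux_mul_inv_rev hinv huniq y z
      rw [hd]; dsimp only
      rw [e1, e2]
      exact max_le ((hRmul x y z).trans (le_max_left _ _))
        ((hL x⁻¹ y⁻¹ z⁻¹).trans (le_max_right _ _))
  · -- d x y = d x⁻¹ y⁻¹
    intro x y
    rw [hd]; dsimp only
    rw [aux_inv_inv hinv huniq x, aux_inv_inv hinv huniq y]
    exact max_comm _ _
end
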